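/- arXiv:math/9808078 — 5 statements merged into one kernel-verified Lean document; each statement's English description precedes it below -/
import Mathlib

section
/- Let r ≥ 1 and let n_1, …, n_r be positive integers, and let N ≥ 2 be divisible by each n_i with N/n_i ≥ 2 for all i. Let S be the set of tuples f = (f_1, …, f_r) where f_i : Fin N → Fin n_i and every fiber of each f_i has exactly N/n_i elements. Fix a label v and set α(f) = #{ j : f_i(j) = v_i for all i }. Then, as an identity of rational numbers, (1/|S|) · ∑_{f ∈ S} C(α(f), 2) = C(N, 2) · ∏_{i=1}^r (N − n_i) / ( n_i² · (N − 1) ), where C(m,2) = m(m−1)/2 denotes the binomial coefficient. -/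
/-!
Twice `C(α(f), 2)` is the number of ordered pairs of distinct balls that both receive the
label `v`, so summing over outcomes and exchanging the sums turns `∑ C(α(f), 2)` into a sum
over ordered pairs `(j, k)` of the number of outcomes that put `j` and `k` into pot `v_i` in
every round. The rounds are independent, so that number is a product over the rounds. In a
single round it does not depend on the pair, since permuting the balls permutes the balanced
assignments; double counting the pairs inside pot `v_i` then shows that it is the fraction
`m(m - 1) / (N(N - 1))`, with `m = N / n_i`, of all balanced assignments, and
`m(m - 1) / (N(N - 1)) = (N - n_i) / (n_i² (N - 1))`.
-/

open Finset

lemma Finset.offDiag_filter {α : Type*} [DecidableEq α] (s : Finset α) (p : α → Prop)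
    [DecidablePred p] :
    (s.filter p).offDiag = {x ∈ s.offDiag | p x.1 ∧ p x.2} := by
  ext; simp [and_assoc, and_comm, and_left_comm]

lemma Finset.card_offDiag_eq_two_mul_choose {α : Type*} [DecidableEq α] (s : Finset α) :
    #s.offDiag = 2 * (#s).choose 2 := by
  rw [offDiag_card, Nat.choose_two_right, Nat.mul_div_cancel' (Nat.even_mul_pred_self _).two_dvd,
    Nat.mul_sub_one]

lemma Finset.sum_card_offDiag_filter {ι α : Type*} [DecidableEq α] (s : Finset α)
    (F : Finset ι) (p : ι → α → Prop) [∀ f, DecidablePred (p f)] :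
    ∑ f ∈ F, #(s.filter (p f)).offDiag = ∑ x ∈ s.offDiag, #{f ∈ F | p f x.1 ∧ p f x.2} := by
  simp_rw [offDiag_filter]
  exact sum_card_bipartiteAbove_eq_sum_card_bipartiteBelow _

lemma Finset.prod_Icc_one_eq_prod_fin {M : Type*} [CommMonoid M] (r : ℕ) (g : ℕ → M) :
    ∏ i ∈ Icc 1 r, g i = ∏ i : Fin r, g (i + 1) := by
  rw [Fin.prod_univ_eq_prod_range (fun i => g (i + 1)), range_eq_Ico, prod_Ico_add', zero_add,
    Ico_add_one_right_eq_Icc]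

lemma mul_sub_one_div_mul_sub_one_of_eq_mul {N n m : ℕ} (hN : 2 ≤ N) (h : N = n * m) :
    (m * (m - 1) / (N * (N - 1)) : ℚ) = (N - n) / (n ^ 2 * (N - 1)) := by
  have hn : (n : ℚ) ≠ 0 := by rintro ⟨⟩; simp_all
  have hm : (m : ℚ) ≠ 0 := by rintro ⟨⟩; simp_all
  have hN1 : (N : ℚ) - 1 ≠ 0 := by rw [sub_ne_zero]; exact_mod_cast (by omega : N ≠ 1)
  rw [h, Nat.cast_mul] at hN1 ⊢
  field_simp

section Balanced

variable {α β : Type*} [Fintype α] [DecidableEq α] [Fintype β] [DecidableEq β]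

variable (α β) in
def balanced (m : ℕ) : Finset (α → β) := {f | ∀ b, #{a | f a = b} = m}

lemma mem_balanced {m : ℕ} {f : α → β} : f ∈ balanced α β m ↔ ∀ b, #{a | f a = b} = m := by
  simp [balanced]

lemma balanced_nonempty {m : ℕ} (h : Fintype.card α = Fintype.card β * m) :
    (balanced α β m).Nonempty := by
  obtain ⟨e⟩ : Nonempty (α ≃ β × Fin m) := Fintype.card_eq.mp (by simp [h])
  refine ⟨fun a => (e a).1, mem_balanced.2 fun b => ?_⟩
  calc #{a | (e a).1 = b} = #({b} ×ˢ univ : Finset (β × Fin m)) :=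
        card_equiv e (by simp [Prod.ext_iff, eq_comm])
    _ = m := by simp

lemma comp_perm_mem_balanced {m : ℕ} {f : α → β} (hf : f ∈ balanced α β m)
    (σ : Equiv.Perm α) : f ∘ σ ∈ balanced α β m := by
  refine mem_balanced.2 fun b => ?_
  rw [← mem_balanced.1 hf b]
  exact card_equiv σ (by simp)

lemma card_balanced_filter_perm (m : ℕ) (b : β) (σ : Equiv.Perm α) (a a' : α) :
    #{f ∈ balanced α β m | f (σ a) = b ∧ f (σ a') = b} =
      #{f ∈ balanced α β m | f a = b ∧ f a' = b} :=
  card_nbij' (· ∘ σ) (· ∘ σ.symm)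
    (fun f hf => by simp_all [comp_perm_mem_balanced])
    (fun f hf => by simp_all [comp_perm_mem_balanced])
    (fun f _ => by ext; simp) (fun f _ => by ext; simp)

lemma card_balanced_filter_pair_eq (m : ℕ) (b : β) {a a' c c' : α} (ha : a ≠ a')
    (hc : c ≠ c') :
    #{f ∈ balanced α β m | f c = b ∧ f c' = b} =
      #{f ∈ balanced α β m | f a = b ∧ f a' = b} := by
  obtain ⟨σ, hσa, hσa'⟩ :=
    MulAction.is_two_pretransitive_iff.mp (Equiv.Perm.isMultiplyPretransitive α 2) ha hc
  rw [← hσa, ← hσa']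
  exact card_balanced_filter_perm m b σ a a'

lemma card_balanced_filter_pair (m : ℕ) (b : β) {a a' : α} (ha : a ≠ a') :
    (#{f ∈ balanced α β m | f a = b ∧ f a' = b} : ℚ) =
      #(balanced α β m) * (m * (m - 1) / (Fintype.card α * (Fintype.card α - 1))) := by
  have hcard : (1 : ℚ) < Fintype.card α := by
    exact_mod_cast Fintype.one_lt_card_iff.2 ⟨a, a', ha⟩
  have hcount := sum_card_offDiag_filter univ (balanced α β m) fun f a => f a = b
  rw [sum_congr rfl fun f hf => by rw [card_offDiag_eq_two_mul_choose, mem_balanced.1 hf b],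
    sum_congr rfl fun x hx => card_balanced_filter_pair_eq m b ha (mem_offDiag.1 hx).2.2,
    sum_const, sum_const, card_offDiag_eq_two_mul_choose, card_univ] at hcount
  have hcountℚ := congrArg (fun k : ℕ => (k : ℚ)) hcount
  push_cast [smul_eq_mul, Nat.cast_choose_two] at hcountℚ
  rw [mul_div_assoc', eq_div_iff (by nlinarith)]
  linear_combination -hcountℚ

end Balanced

section Labelled

variable {α ι : Type*} [Fintype α] [Fintype ι] {β : ι → Type*} [∀ i, DecidableEq (β i)]

def labelled (f : ∀ i, α → β i) (v : ∀ i, β i) : Finset α := {a | ∀ i, f i a = v i}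

theorem sum_choose_two_card_labelled [DecidableEq α] [DecidableEq ι] [∀ i, Fintype (β i)]
    (m : ι → ℕ) (v : ∀ i, β i) :
    ∑ f ∈ Fintype.piFinset fun i => balanced α (β i) (m i), ((#(labelled f v)).choose 2 : ℚ) =
      ((Fintype.card α).choose 2 : ℚ) * ∏ i, (#(balanced α (β i) (m i)) : ℚ) *
        (m i * (m i - 1) / (Fintype.card α * (Fintype.card α - 1))) := by
  unfold labelled
  set B := fun i => balanced α (β i) (m i)
  have hpair : ∀ x ∈ (univ : Finset α).offDiag,
      (#{f ∈ Fintype.piFinset B | (∀ i, f i x.1 = v i) ∧ ∀ i, f i x.2 = v i} : ℚ) =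
        ∏ i, (#(B i) : ℚ) * (m i * (m i - 1) / (Fintype.card α * (Fintype.card α - 1))) := by
    intro x hx
    have hfilter : {f ∈ Fintype.piFinset B | (∀ i, f i x.1 = v i) ∧ ∀ i, f i x.2 = v i} =
        Fintype.piFinset fun i => {g ∈ B i | g x.1 = v i ∧ g x.2 = v i} := by
      ext; simp [forall_and]
    rw [hfilter, Fintype.card_piFinset, Nat.cast_prod]
    exact prod_congr rfl fun i _ => card_balanced_filter_pair (m i) (v i) (mem_offDiag.1 hx).2.2
  have hcount := congrArg (fun k : ℕ => (k : ℚ))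
    (sum_card_offDiag_filter univ (Fintype.piFinset B) fun f a => ∀ i, f i a = v i)
  simp only [card_offDiag_eq_two_mul_choose, Nat.cast_sum, Nat.cast_mul] at hcount
  rw [sum_congr rfl hpair, sum_const, card_offDiag_eq_two_mul_choose, card_univ, ← mul_sum,
    nsmul_eq_mul] at hcount
  push_cast at hcount
  linear_combination hcount / 2

end Labelled

theorem firstWay_W_general (r : ℕ) (n : ℕ → ℕ)
    (N : ℕ) (hN : 2 ≤ N) (hdvd : ∀ i ∈ Finset.Icc 1 r, n i ∣ N)
    (v : ∀ i : Fin r, Fin (n (i.val + 1))) :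
    (1 : ℚ) / (Fintype.card {f : ∀ i : Fin r, Fin N → Fin (n (i.val + 1)) //
          ∀ (i : Fin r) (a : Fin (n (i.val + 1))),
            (Finset.univ.filter fun k => f i k = a).card = N / n (i.val + 1)} : ℚ) *
        (∑ f : {f : ∀ i : Fin r, Fin N → Fin (n (i.val + 1)) //
            ∀ (i : Fin r) (a : Fin (n (i.val + 1))),
              (Finset.univ.filter fun k => f i k = a).card = N / n (i.val + 1)},
          (((Finset.univ.filter fun j : Fin N => ∀ i : Fin r, f.1 i j = v i).card).choose 2
            : ℚ)) =
      (N.choose 2 : ℚ) *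
        ∏ i ∈ Finset.Icc 1 r,
          ((N : ℚ) - (n i : ℚ)) / ((n i : ℚ) ^ 2 * ((N : ℚ) - 1)) := by
  have hNm : ∀ i : Fin r, N = n (i.val + 1) * (N / n (i.val + 1)) := fun i =>
    (Nat.mul_div_cancel' (hdvd _ (mem_Icc.2 ⟨Nat.le_add_left 1 _, i.isLt⟩))).symm
  have hS : ∀ f, f ∈ Fintype.piFinset (fun i : Fin r =>
      balanced (Fin N) (Fin (n (i.val + 1))) (N / n (i.val + 1))) ↔
      ∀ (i : Fin r) (a : Fin (n (i.val + 1))), #{k | f i k = a} = N / n (i.val + 1) := by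
    simp [mem_balanced]
  have hB : ∀ i : Fin r,
      (#(balanced (Fin N) (Fin (n (i.val + 1))) (N / n (i.val + 1))) : ℚ) ≠ 0 := fun i => by
    exact_mod_cast (balanced_nonempty (by simpa using hNm i)).card_pos.ne'
  -- The statement decides `∀ i : Fin r` by `Nat.decidableForallFin`, `labelled` by
  -- `Fintype.decidableForallFintype`.
  have hlabelled : ∀ f : ∀ i : Fin r, Fin N → Fin (n (i.val + 1)),
      #{j | ∀ i, f i j = v i} = #(labelled f v) := fun f => by
    unfold labelled; congr
  simp only [hlabelled]
  rw [Fintype.card_of_subtype _ hS, ← sum_subtype _ hS fun f => ((#(labelled f v)).choose 2 : ℚ),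
    sum_choose_two_card_labelled, prod_mul_distrib, prod_Icc_one_eq_prod_fin,
    Fintype.card_piFinset, Nat.cast_prod, Fintype.card_fin,
    prod_congr rfl fun i _ => mul_sub_one_div_mul_sub_one_of_eq_mul hN (hNm i),
    one_div, mul_left_comm, inv_mul_cancel_left₀ (prod_ne_zero_iff.2 fun i _ => hB i)]

/-- **First Way**, the quantity `W(α) = (1/|S|) ∑_{f∈S} C(α(f),2)` equals
`C(N,2) ∏_{i=1}^r (N - n_i) / (n_i² (N-1))`, as rational numbers. -/
theorem firstWay_W (r : ℕ) (hr : 1 ≤ r) (n : ℕ → ℕ)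
    (hn : ∀ i ∈ Finset.Icc 1 r, 0 < n i)
    (N : ℕ) (hN : 2 ≤ N) (hdvd : ∀ i ∈ Finset.Icc 1 r, n i ∣ N)
    (hsize : ∀ i ∈ Finset.Icc 1 r, 2 ≤ N / n i)
    (v : ∀ i : Fin r, Fin (n (i.val + 1))) :
    (1 : ℚ) / (Fintype.card {f : ∀ i : Fin r, Fin N → Fin (n (i.val + 1)) //
          ∀ (i : Fin r) (a : Fin (n (i.val + 1))),
            (Finset.univ.filter fun k => f i k = a).card = N / n (i.val + 1)} : ℚ) *
        (∑ f : {f : ∀ i : Fin r, Fin N → Fin (n (i.val + 1)) //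
            ∀ (i : Fin r) (a : Fin (n (i.val + 1))),
              (Finset.univ.filter fun k => f i k = a).card = N / n (i.val + 1)},
          (((Finset.univ.filter fun j : Fin N => ∀ i : Fin r, f.1 i j = v i).card).choose 2
            : ℚ)) =
      (N.choose 2 : ℚ) *
        ∏ i ∈ Finset.Icc 1 r,
          ((N : ℚ) - (n i : ℚ)) / ((n i : ℚ) ^ 2 * ((N : ℚ) - 1)) :=
  firstWay_W_general r n N hN hdvd v
end

section
/- Let r ≥ 1 and let n_1, …, n_r be positive integers. For each positive integer N divisible by each n_i with N/n_i ≥ 2 for all i, let V(N) denote the variance of the count α of balls receiving a fixed label v under the First Way on N balls, i.e. V(N) = (1/|S|) ∑_{f ∈ S} (α(f) − N/∏ n_i)². Then there is a constant C such that for all such N, | V(N) − ( N/∏_{i=1}^r n_i − (N/∏_{i=1}^r n_i²) · (1 + ∑_{i=1}^r (n_i − 1)) ) | ≤ C. (Proposition 1: the variance in the First Way is N/∏ n_i − (N/∏ n_i²)(1 + ∑_i (n_i − 1)) + O(1).) -/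
open Finset

variable {N n' m : ℕ}

/-- Balanced functions -/
abbrev Bal (N n' m : ℕ) := {g : Fin N → Fin n' // ∀ a, (Finset.univ.filter fun k => g k = a).card = m}

def permLabel (σ : Equiv.Perm (Fin n')) : Bal N n' m ≃ Bal N n' m where
  toFun g := ⟨σ ∘ g.1, by
    intro a
    have h : (Finset.univ.filter fun k => σ (g.1 k) = a)
        = (Finset.univ.filter fun k => g.1 k = σ.symm a) := by
      apply Finset.filter_congr; intro k _
      simp [Equiv.apply_eq_iff_eq_symm_apply]
    simpa [Function.comp, h] using g.2 (σ.symm a)⟩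
  invFun g := ⟨σ.symm ∘ g.1, by
    intro a
    have h : (Finset.univ.filter fun k => σ.symm (g.1 k) = a)
        = (Finset.univ.filter fun k => g.1 k = σ a) := by
      apply Finset.filter_congr; intro k _
      simp [Equiv.symm_apply_eq]
    simpa [Function.comp, h] using g.2 (σ a)⟩
  left_inv g := by ext k; simp
  right_inv g := by ext k; simp

def permDomain (τ : Equiv.Perm (Fin N)) : Bal N n' m ≃ Bal N n' m where
  toFun g := ⟨g.1 ∘ τ, by
    intro a
    refine Eq.trans ?_ (g.2 a)
    apply Finset.card_equiv τ
    intro k; simp⟩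
  invFun g := ⟨g.1 ∘ τ.symm, by
    intro a
    refine Eq.trans ?_ (g.2 a)
    apply Finset.card_equiv τ.symm
    intro k; simp⟩
  left_inv g := by ext k; simp
  right_inv g := by ext k; simp

lemma cnt1_swap (j : Fin N) (a b : Fin n') :
    (Finset.univ.filter fun g : Bal N n' m => g.1 j = a).card
      = (Finset.univ.filter fun g : Bal N n' m => g.1 j = b).card := by
  apply Finset.card_equiv (permLabel (Equiv.swap a b))
  intro g
  simp only [Finset.mem_filter, Finset.mem_univ, true_and, permLabel, Equiv.coe_fn_mk,
    Function.comp_apply]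
  constructor
  · rintro h; rw [h]; exact Equiv.swap_apply_left a b
  · intro h
    have := (Equiv.swap a b).injective (a₁ := g.1 j) (a₂ := a) (by rw [h, Equiv.swap_apply_left])
    exact this

lemma n_mul_cnt1 (j : Fin N) (a : Fin n') :
    n' * (Finset.univ.filter fun g : Bal N n' m => g.1 j = a).card
      = Fintype.card (Bal N n' m) := by
  have h := Finset.card_eq_sum_card_fiberwise
      (f := fun g : Bal N n' m => g.1 j) (s := Finset.univ) (t := Finset.univ) (by simp)
  rw [Fintype.card, h, Finset.sum_congr rfl (fun b _ => (cnt1_swap j b a))]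
  simp [mul_comm]

lemma cnt2_dom {j k k' : Fin N} (a : Fin n') (hk : k ≠ j) (hk' : k' ≠ j) :
    (Finset.univ.filter fun g : Bal N n' m => g.1 j = a ∧ g.1 k = a).card
      = (Finset.univ.filter fun g : Bal N n' m => g.1 j = a ∧ g.1 k' = a).card := by
  apply Finset.card_equiv (permDomain (Equiv.swap k k'))
  intro g
  simp only [Finset.mem_filter, Finset.mem_univ, true_and, permDomain, Equiv.coe_fn_mk,
    Function.comp_apply, Equiv.swap_apply_of_ne_of_ne (Ne.symm hk) (Ne.symm hk'),
    Equiv.swap_apply_right]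

example : True := trivial

lemma sum_cnt2 (j : Fin N) (a : Fin n') :
    ∑ k ∈ Finset.univ.erase j,
        (Finset.univ.filter fun g : Bal N n' m => g.1 j = a ∧ g.1 k = a).card
      = (m - 1) * (Finset.univ.filter fun g : Bal N n' m => g.1 j = a).card := by
  simp only [Finset.card_filter]
  rw [Finset.sum_comm]
  rw [Finset.mul_sum]
  apply Finset.sum_congr rfl
  intro g _
  by_cases hj : g.1 j = a
  · simp only [hj, true_and, mul_ite, mul_one, mul_zero, if_true]
    have : ∑ k ∈ Finset.univ.erase j, (if g.1 k = a then 1 else 0)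
        = ((Finset.univ.erase j).filter fun k => g.1 k = a).card := by
      rw [Finset.card_filter]
    rw [this, Finset.filter_erase, Finset.card_erase_of_mem (by simp [hj]), g.2 a]
  · simp [hj]


lemma key2 {j k : Fin N} (a : Fin n') (hjk : j ≠ k) :
    (N - 1) * (n' *
        (Finset.univ.filter fun g : Bal N n' m => g.1 j = a ∧ g.1 k = a).card)
      = (m - 1) * Fintype.card (Bal N n' m) := by
  have hconst : ∀ k' ∈ Finset.univ.erase j,
      (Finset.univ.filter fun g : Bal N n' m => g.1 j = a ∧ g.1 k' = a).card
        = (Finset.univ.filter fun g : Bal N n' m => g.1 j = a ∧ g.1 k = a).card := by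
    intro k' hk'
    exact cnt2_dom a (Finset.mem_erase.mp hk').1 (Ne.symm hjk)
  have hsum := sum_cnt2 (N := N) (n' := n') (m := m) j a
  rw [Finset.sum_congr rfl hconst, Finset.sum_const, Finset.card_erase_of_mem (by simp)] at hsum
  simp only [Finset.card_univ, Fintype.card_fin, smul_eq_mul] at hsum
  set c2 := (Finset.univ.filter fun g : Bal N n' m => g.1 j = a ∧ g.1 k = a).card with hc2
  set c1 := (Finset.univ.filter fun g : Bal N n' m => g.1 j = a).card with hc1
  calc (N - 1) * (n' * c2) = n' * ((N-1) * c2) := by ring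
    _ = n' * ((m - 1) * c1) := by rw [hsum]
    _ = (m - 1) * (n' * c1) := by ring
    _ = (m - 1) * Fintype.card (Bal N n' m) := by rw [n_mul_cnt1]

lemma bal_nonempty (hm : 0 < m) (hN : N = m * n') : Nonempty (Bal N n' m) := by
  refine ⟨⟨fun j => (finProdFinEquiv.symm (Fin.cast hN j)).2, ?_⟩⟩
  intro a
  rw [← Fintype.card_subtype]
  have e : {j : Fin N // (finProdFinEquiv.symm (Fin.cast hN j)).2 = a}
      ≃ {q : Fin m × Fin n' // q.2 = a} :=
    Equiv.subtypeEquiv ((finCongr hN).trans finProdFinEquiv.symm) (by intro j; simp [finCongr])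
  rw [Fintype.card_congr e, Fintype.card_subtype]
  have : (Finset.univ.filter fun q : Fin m × Fin n' => q.2 = a)
      = Finset.univ ×ˢ {a} := by
    ext q
    simp only [Finset.mem_filter, Finset.mem_univ, true_and, Finset.mem_product,
      Finset.mem_singleton]
  rw [this, Finset.card_product]
  simp

lemma weier {ι : Type*} [DecidableEq ι] (s : Finset ι) (a : ι → ℚ) (h0 : ∀ i ∈ s, 0 ≤ a i)
    (h1 : ∀ i ∈ s, a i ≤ 1) :
    1 - ∑ i ∈ s, a i ≤ ∏ i ∈ s, (1 - a i) ∧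
      ∏ i ∈ s, (1 - a i) ≤ 1 - ∑ i ∈ s, a i + (∑ i ∈ s, a i) ^ 2 := by
  induction s using Finset.induction_on with
  | empty => simp
  | @insert x s hx ih =>
    have h0' : ∀ i ∈ s, 0 ≤ a i := fun i hi => h0 i (Finset.mem_insert_of_mem hi)
    have h1' : ∀ i ∈ s, a i ≤ 1 := fun i hi => h1 i (Finset.mem_insert_of_mem hi)
    obtain ⟨ihl, ihr⟩ := ih h0' h1'
    have hax0 : 0 ≤ a x := h0 x (Finset.mem_insert_self x s)
    have hax1 : a x ≤ 1 := h1 x (Finset.mem_insert_self x s)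
    have hS0 : 0 ≤ ∑ i ∈ s, a i := Finset.sum_nonneg h0'
    have hP0 : 0 ≤ ∏ i ∈ s, (1 - a i) :=
      Finset.prod_nonneg (fun i hi => by linarith [h1' i hi])
    rw [Finset.prod_insert hx, Finset.sum_insert hx]
    set S := ∑ i ∈ s, a i
    set P := ∏ i ∈ s, (1 - a i)
    constructor
    · nlinarith
    · nlinarith

lemma boole_mul_boole (P Q : Prop) [Decidable P] [Decidable Q] :
    (if P then (1:ℚ) else 0) * (if Q then (1:ℚ) else 0) = if P ∧ Q then 1 else 0 := by
  by_cases hP : P <;> by_cases hQ : Q <;> simp [hP, hQ]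

lemma variance_eq (r : ℕ) (ν μ : Fin r → ℕ) (v : ∀ i, Fin (ν i)) (N : ℕ)
    (hνpos : ∀ i, 0 < ν i) (hμν : ∀ i, μ i * ν i = N) (hμ2 : ∀ i, 2 ≤ μ i)
    (hN2 : 2 ≤ N) :
    (1:ℚ) / (Fintype.card (∀ i, Bal N (ν i) (μ i)) : ℚ) *
      ∑ p : ∀ i, Bal N (ν i) (μ i),
        (((Finset.univ.filter fun j : Fin N => ∀ i, (p i).1 j = v i).card : ℚ)
          - (N : ℚ) / ∏ i, (ν i : ℚ)) ^ 2
    = (N:ℚ) / (∏ i, (ν i : ℚ))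
        + (N:ℚ) * ((N:ℚ) - 1) * ∏ i, (((μ i : ℚ) - 1) / ((ν i : ℚ) * ((N:ℚ) - 1)))
        - ((N:ℚ) / ∏ i, (ν i : ℚ)) ^ 2 := by
  have hν0 : ∀ i, (ν i : ℚ) ≠ 0 := fun i => Nat.cast_ne_zero.mpr (hνpos i).ne'
  have hN1 : ((N:ℚ) - 1) ≠ 0 := by
    have : (2:ℚ) ≤ (N:ℚ) := by exact_mod_cast hN2
    linarith
  -- counts
  set cT : Fin r → ℚ := fun i => (Fintype.card (Bal N (ν i) (μ i)) : ℚ) with hcT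
  have hcT0 : ∀ i, cT i ≠ 0 := by
    intro i
    have : Nonempty (Bal N (ν i) (μ i)) :=
      bal_nonempty (by have := hμ2 i; omega) (hμν i).symm
    simp [hcT, Fintype.card_ne_zero]
  set c1 : Fin r → ℚ := fun i => cT i / ν i with hc1
  set c2 : Fin r → ℚ := fun i => cT i * ((μ i : ℚ) - 1) / ((ν i : ℚ) * ((N:ℚ) - 1)) with hc2
  have h1 : ∀ (i : Fin r) (j : Fin N),
      ((Finset.univ.filter fun g : Bal N (ν i) (μ i) => g.1 j = v i).card : ℚ) = c1 i := by
    intro i j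
    have := n_mul_cnt1 (N := N) (n' := ν i) (m := μ i) j (v i)
    have hq : (ν i : ℚ) * ((Finset.univ.filter fun g : Bal N (ν i) (μ i) => g.1 j = v i).card : ℚ)
        = cT i := by simp only [hcT]; exact_mod_cast this
    simp only [hc1]
    rw [eq_div_iff (hν0 i)]
    linear_combination hq
  have h2 : ∀ (i : Fin r) (j k : Fin N), j ≠ k →
      ((Finset.univ.filter fun g : Bal N (ν i) (μ i) => g.1 j = v i ∧ g.1 k = v i).card : ℚ)
        = c2 i := by
    intro i j k hjk
    have := key2 (N := N) (n' := ν i) (m := μ i) (v i) hjk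
    have hcast : (((N:ℕ) - 1 : ℕ) : ℚ) = (N:ℚ) - 1 := by
      have : 1 ≤ N := by omega
      push_cast [this]; ring
    have hcastμ : (((μ i) - 1 : ℕ) : ℚ) = (μ i : ℚ) - 1 := by
      have : 1 ≤ μ i := by have := hμ2 i; omega
      push_cast [this]; ring
    have hq : ((N:ℚ) - 1) * ((ν i : ℚ) *
        ((Finset.univ.filter fun g : Bal N (ν i) (μ i) => g.1 j = v i ∧ g.1 k = v i).card : ℚ))
        = ((μ i : ℚ) - 1) * cT i := by
      rw [← hcast, ← hcastμ]
      simp only [hcT]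
      exact_mod_cast this
    simp only [hc2]
    rw [eq_div_iff (by exact mul_ne_zero (hν0 i) hN1)]
    linear_combination hq
  have hα : ∀ p : ∀ i, Bal N (ν i) (μ i),
      ((Finset.univ.filter fun j : Fin N => ∀ i, (p i).1 j = v i).card : ℚ)
        = ∑ j : Fin N, ∏ i, (if (p i).1 j = v i then (1:ℚ) else 0) := by
    intro p
    rw [← Finset.sum_boole]
    apply Finset.sum_congr rfl
    intro j _
    rw [Finset.prod_boole]
    simp
  have hSum1 : ∑ p : ∀ i, Bal N (ν i) (μ i),
      ((Finset.univ.filter fun j : Fin N => ∀ i, (p i).1 j = v i).card : ℚ)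
      = N * ∏ i, c1 i := by
    simp only [hα]
    rw [Finset.sum_comm]
    have hj : ∀ j : Fin N, ∑ p : ∀ i, Bal N (ν i) (μ i),
        ∏ i, (if (p i).1 j = v i then (1:ℚ) else 0) = ∏ i, c1 i := by
      intro j
      have hps := Fintype.prod_sum
        (f := fun (i : Fin r) (g : Bal N (ν i) (μ i)) => if g.1 j = v i then (1:ℚ) else 0)
      rw [← hps]
      exact Finset.prod_congr rfl fun i _ => by rw [Finset.sum_boole, h1]
    rw [Finset.sum_congr rfl fun j _ => hj j, Finset.sum_const]
    simp [mul_comm]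
  have hSum2 : ∑ p : ∀ i, Bal N (ν i) (μ i),
      (((Finset.univ.filter fun j : Fin N => ∀ i, (p i).1 j = v i).card : ℚ))^2
      = N * ∏ i, c1 i + (N * ((N:ℚ) - 1)) * ∏ i, c2 i := by
    have hsq : ∀ p : ∀ i, Bal N (ν i) (μ i),
        (((Finset.univ.filter fun j : Fin N => ∀ i, (p i).1 j = v i).card : ℚ))^2
        = ∑ j : Fin N, ∑ k : Fin N, ∏ i,
            ((if (p i).1 j = v i then (1:ℚ) else 0) * (if (p i).1 k = v i then (1:ℚ) else 0)) := by
      intro p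
      rw [sq, hα p, Finset.sum_mul_sum]
      exact Finset.sum_congr rfl fun j _ => Finset.sum_congr rfl fun k _ =>
        (Finset.prod_mul_distrib).symm
    simp only [hsq]
    rw [Finset.sum_comm]
    rw [Finset.sum_congr rfl fun j (_ : j ∈ Finset.univ) => Finset.sum_comm]
    have hin : ∀ j k : Fin N, (∑ p : ∀ i, Bal N (ν i) (μ i),
        ∏ i, ((if (p i).1 j = v i then (1:ℚ) else 0) * (if (p i).1 k = v i then (1:ℚ) else 0)))
        = if j = k then ∏ i, c1 i else ∏ i, c2 i := by
      intro j k
      have hps := Fintype.prod_sum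
        (f := fun (i : Fin r) (g : Bal N (ν i) (μ i)) =>
          (if g.1 j = v i then (1:ℚ) else 0) * (if g.1 k = v i then (1:ℚ) else 0))
      rw [← hps]
      by_cases hjk : j = k
      · subst hjk
        rw [if_pos rfl]
        refine Finset.prod_congr rfl fun i _ => ?_
        simp only [boole_mul_boole, and_self]
        rw [Finset.sum_boole, h1]
      · rw [if_neg hjk]
        refine Finset.prod_congr rfl fun i _ => ?_
        simp only [boole_mul_boole]
        rw [Finset.sum_boole, h2 i j k hjk]
    rw [Finset.sum_congr rfl fun j (_ : j ∈ Finset.univ) =>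
      Finset.sum_congr rfl fun k (_ : k ∈ Finset.univ) => hin j k]
    have hrow : ∀ j : Fin N, ∑ k : Fin N, (if j = k then ∏ i, c1 i else ∏ i, c2 i)
        = ∏ i, c1 i + ((N:ℚ) - 1) * ∏ i, c2 i := by
      intro j
      rw [← Finset.add_sum_erase _ _ (Finset.mem_univ j), if_pos rfl]
      congr 1
      rw [Finset.sum_congr rfl fun k hk => if_neg (Ne.symm (Finset.mem_erase.mp hk).1),
        Finset.sum_const, Finset.card_erase_of_mem (Finset.mem_univ j), nsmul_eq_mul]
      congr 1
      rw [Finset.card_univ, Fintype.card_fin, Nat.cast_sub (by omega), Nat.cast_one]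
    rw [Finset.sum_congr rfl fun j (_ : j ∈ Finset.univ) => hrow j, Finset.sum_const,
      Finset.card_univ, Fintype.card_fin, nsmul_eq_mul]
    ring
  have hcard : (Fintype.card (∀ i, Bal N (ν i) (μ i)) : ℚ) = ∏ i, cT i := by
    simp only [hcT]
    rw [Fintype.card_pi]
    push_cast
    rfl
  have htot : ∑ p : ∀ i, Bal N (ν i) (μ i),
      (((Finset.univ.filter fun j : Fin N => ∀ i, (p i).1 j = v i).card : ℚ)
        - (N : ℚ) / ∏ i, (ν i : ℚ)) ^ 2
      = (N * ∏ i, c1 i + (N * ((N:ℚ) - 1)) * ∏ i, c2 i)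
        - 2 * ((N:ℚ)/∏ i, (ν i:ℚ)) * (N * ∏ i, c1 i)
        + (∏ i, cT i) * ((N:ℚ)/∏ i, (ν i:ℚ))^2 := by
    have hexp : ∀ p : ∀ i, Bal N (ν i) (μ i),
        (((Finset.univ.filter fun j : Fin N => ∀ i, (p i).1 j = v i).card : ℚ)
          - (N : ℚ) / ∏ i, (ν i : ℚ)) ^ 2
        = (((Finset.univ.filter fun j : Fin N => ∀ i, (p i).1 j = v i).card : ℚ))^2
          - 2*((N:ℚ)/∏ i, (ν i:ℚ)) *
            ((Finset.univ.filter fun j : Fin N => ∀ i, (p i).1 j = v i).card : ℚ)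
          + ((N:ℚ)/∏ i, (ν i:ℚ))^2 := fun p => by ring
    rw [Finset.sum_congr rfl fun p (_ : p ∈ Finset.univ) => hexp p]
    rw [Finset.sum_add_distrib, Finset.sum_sub_distrib, ← Finset.mul_sum, Finset.sum_const,
      hSum1, hSum2, Finset.card_univ, nsmul_eq_mul, ← hcard]
  rw [htot, hcard]
  have hprodc1 : ∏ i, c1 i = (∏ i, cT i) / (∏ i, (ν i:ℚ)) := by
    simp only [hc1]
    rw [Finset.prod_div_distrib]
  have hprodc2 : ∏ i, c2 i
      = (∏ i, cT i) * ∏ i, (((μ i:ℚ)-1)/((ν i:ℚ)*((N:ℚ)-1))) := by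
    simp only [hc2]
    rw [← Finset.prod_mul_distrib]
    exact Finset.prod_congr rfl fun i _ => by ring
  rw [hprodc1, hprodc2]
  have hPν : (∏ i, (ν i:ℚ)) ≠ 0 := Finset.prod_ne_zero_iff.mpr fun i _ => hν0 i
  have hPcT : (∏ i, cT i) ≠ 0 := Finset.prod_ne_zero_iff.mpr fun i _ => hcT0 i
  field_simp
  ring


lemma icc_prod_fin (r : ℕ) (g : ℕ → ℚ) :
    ∏ i ∈ Finset.Icc 1 r, g i = ∏ i : Fin r, g (i.val + 1) := by
  induction r with
  | zero => simp
  | succ r ih =>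
      rw [Finset.prod_Icc_succ_top (Nat.le_add_left 1 r), ih, Fin.prod_univ_castSucc]
      simp

lemma icc_sum_fin (r : ℕ) (g : ℕ → ℚ) :
    ∑ i ∈ Finset.Icc 1 r, g i = ∑ i : Fin r, g (i.val + 1) := by
  induction r with
  | zero => simp
  | succ r ih =>
      rw [Finset.sum_Icc_succ_top (Nat.le_add_left 1 r), ih, Fin.sum_univ_castSucc]
      simp

lemma final_bound (r : ℕ) (ν μ : Fin r → ℕ) (N : ℕ)
    (hνpos : ∀ i, 0 < ν i) (hμν : ∀ i, μ i * ν i = N) (hμ2 : ∀ i, 2 ≤ μ i)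
    (hN2 : 2 ≤ N) :
    |((N:ℚ) / (∏ i, (ν i : ℚ))
        + (N:ℚ) * ((N:ℚ) - 1) * ∏ i, (((μ i : ℚ) - 1) / ((ν i : ℚ) * ((N:ℚ) - 1)))
        - ((N:ℚ) / ∏ i, (ν i : ℚ)) ^ 2)
      - ((N : ℚ) / (∏ i, (ν i : ℚ)) -
          (N : ℚ) / (∏ i, (ν i : ℚ) ^ 2) * (1 + ∑ i, ((ν i : ℚ) - 1)))|
      ≤ 2 * (∑ i, ((ν i : ℚ) - 1)) ^ 2 := by
  have hNQ : (2:ℚ) ≤ (N:ℚ) := by exact_mod_cast hN2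
  have hN1 : (0:ℚ) < (N:ℚ) - 1 := by linarith
  have hν0 : ∀ i, (0:ℚ) < (ν i : ℚ) := fun i => by exact_mod_cast hνpos i
  have hνleN : ∀ i, (ν i : ℚ) ≤ (N:ℚ) := by
    intro i
    have : ν i ≤ N := by
      have := hμν i
      have := hμ2 i
      nlinarith
    exact_mod_cast this
  set a : Fin r → ℚ := fun i => ((ν i : ℚ) - 1) / ((N:ℚ) - 1) with ha
  have ha0 : ∀ i ∈ Finset.univ, 0 ≤ a i := by
    intro i _
    apply div_nonneg _ hN1.le
    have := hν0 i
    have : (1:ℚ) ≤ (ν i : ℚ) := by exact_mod_cast hνpos i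
    linarith
  have ha1 : ∀ i ∈ Finset.univ, a i ≤ 1 := by
    intro i _
    rw [ha, div_le_one hN1]
    linarith [hνleN i]
  set K : ℚ := ∑ i, ((ν i : ℚ) - 1) with hK
  have hK0 : 0 ≤ K := by
    rw [hK]
    apply Finset.sum_nonneg
    intro i _
    have : (1:ℚ) ≤ (ν i : ℚ) := by exact_mod_cast hνpos i
    linarith
  have hSA : ∑ i, a i = K / ((N:ℚ) - 1) := by rw [ha, hK, ← Finset.sum_div]
  obtain ⟨hw1, hw2⟩ := weier Finset.univ a ha0 ha1
  rw [hSA] at hw1 hw2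
  -- rewrite the μ-product
  have hμcast : ∀ i, (μ i : ℚ) * (ν i : ℚ) = (N:ℚ) := by
    intro i; exact_mod_cast hμν i
  have hfact : ∀ i ∈ Finset.univ, ((μ i : ℚ) - 1) / ((ν i : ℚ) * ((N:ℚ) - 1))
      = (1 - a i) / (ν i : ℚ) ^ 2 := by
    intro i _
    rw [ha]
    have hνne := (hν0 i).ne'
    have hN1ne := hN1.ne'
    field_simp
    linear_combination hμcast i
  rw [Finset.prod_congr rfl hfact, Finset.prod_div_distrib]
  set PA : ℚ := ∏ i, (1 - a i) with hPA
  rw [show (∏ i, ((ν i:ℚ))^2) = (∏ i, (ν i:ℚ))^2 from Finset.prod_pow _ _ _]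
  set P : ℚ := ∏ i, (ν i : ℚ) with hP
  have hP0 : 0 < P := Finset.prod_pos fun i _ => hν0 i
  have hP1 : 1 ≤ P := by
    rw [hP]
    have : ∏ _i : Fin r, (1:ℚ) ≤ ∏ i, (ν i:ℚ) :=
      Finset.prod_le_prod (by intros; norm_num)
        (by intro i _; exact_mod_cast hνpos i)
    simpa using this
  have hNpos : (0:ℚ) < N := by linarith
  have hE : ((N:ℚ) / P + (N:ℚ) * ((N:ℚ) - 1) * (PA / P ^ 2) - ((N:ℚ) / P) ^ 2)
      - ((N : ℚ) / P - (N : ℚ) / P ^ 2 * (1 + K))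
      = ((N:ℚ) * ((N:ℚ) - 1) / P ^ 2) * (PA - (1 - K / ((N:ℚ) - 1))) := by
    field_simp
    ring
  rw [hE, abs_of_nonneg (by
    apply mul_nonneg
    · positivity
    · linarith)]
  have hD : PA - (1 - K / ((N:ℚ) - 1)) ≤ (K / ((N:ℚ) - 1)) ^ 2 := by linarith
  calc ((N:ℚ) * ((N:ℚ) - 1) / P ^ 2) * (PA - (1 - K / ((N:ℚ) - 1)))
      ≤ ((N:ℚ) * ((N:ℚ) - 1) / P ^ 2) * (K / ((N:ℚ) - 1)) ^ 2 := by
        apply mul_le_mul_of_nonneg_left hD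
        positivity
    _ ≤ 2 * K ^ 2 := by
        rw [div_pow, div_mul_div_comm, div_le_iff₀ (by positivity)]
        have h4 : (1:ℚ) ≤ P^2 := by nlinarith
        have h5 : (N:ℚ) ≤ 2*P^2*((N:ℚ)-1) := by nlinarith
        nlinarith [mul_nonneg (mul_nonneg (sq_nonneg K) hN1.le)
          (by linarith : (0:ℚ) ≤ 2*P^2*((N:ℚ)-1) - N)]

/-- **Proposition 1** (First Way): the variance of the label count is
`N/∏ n_i - (N/∏ n_i²)(1 + ∑_i (n_i - 1)) + O(1)` as `N → ∞` through admissible values. -/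
theorem firstWay_variance_asymptotic (r : ℕ) (hr : 1 ≤ r) (n : ℕ → ℕ)
    (hn : ∀ i ∈ Finset.Icc 1 r, 0 < n i)
    (v : ∀ i : Fin r, Fin (n (i.val + 1))) :
    ∃ C : ℚ, ∀ N : ℕ, 0 < N → (∀ i ∈ Finset.Icc 1 r, n i ∣ N) →
      (∀ i ∈ Finset.Icc 1 r, 2 ≤ N / n i) →
      |(1 : ℚ) / (Fintype.card {f : ∀ i : Fin r, Fin N → Fin (n (i.val + 1)) //
            ∀ (i : Fin r) (a : Fin (n (i.val + 1))),
              (Finset.univ.filter fun k => f i k = a).card = N / n (i.val + 1)} : ℚ) *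
          (∑ f : {f : ∀ i : Fin r, Fin N → Fin (n (i.val + 1)) //
              ∀ (i : Fin r) (a : Fin (n (i.val + 1))),
                (Finset.univ.filter fun k => f i k = a).card = N / n (i.val + 1)},
            (((Finset.univ.filter fun j : Fin N =>
                  ∀ i : Fin r, f.1 i j = v i).card : ℚ) -
                (N : ℚ) / ∏ i ∈ Finset.Icc 1 r, (n i : ℚ)) ^ 2) -
        ((N : ℚ) / (∏ i ∈ Finset.Icc 1 r, (n i : ℚ)) -
          (N : ℚ) / (∏ i ∈ Finset.Icc 1 r, (n i : ℚ) ^ 2) *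
            (1 + ∑ i ∈ Finset.Icc 1 r, ((n i : ℚ) - 1)))| ≤ C := by
  refine ⟨2 * (∑ i ∈ Finset.Icc 1 r, ((n i : ℚ) - 1)) ^ 2, ?_⟩
  intro N hN hdvd hquot
  have hmem : ∀ i : Fin r, i.val + 1 ∈ Finset.Icc 1 r := by
    intro i
    have := i.isLt
    exact Finset.mem_Icc.mpr ⟨by omega, by omega⟩
  have hνpos : ∀ i : Fin r, 0 < n (i.val + 1) := fun i => hn _ (hmem i)
  have hμ2 : ∀ i : Fin r, 2 ≤ N / n (i.val + 1) := fun i => hquot _ (hmem i)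
  have hμν : ∀ i : Fin r, (N / n (i.val + 1)) * n (i.val + 1) = N :=
    fun i => Nat.div_mul_cancel (hdvd _ (hmem i))
  have hN2 : 2 ≤ N := by
    have h1 := hμν ⟨0, hr⟩
    have h2 := hμ2 ⟨0, hr⟩
    have h3 := hνpos ⟨0, hr⟩
    nlinarith
  rw [icc_prod_fin r (fun x => (n x : ℚ)), icc_prod_fin r (fun x => (n x : ℚ) ^ 2),
    icc_sum_fin r (fun x => (n x : ℚ) - 1)]
  let e : {f : ∀ i : Fin r, Fin N → Fin (n (i.val + 1)) //
        ∀ (i : Fin r) (a : Fin (n (i.val + 1))),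
          (Finset.univ.filter fun k => f i k = a).card = N / n (i.val + 1)}
      ≃ ∀ i : Fin r, Bal N (n (i.val + 1)) (N / n (i.val + 1)) :=
    Equiv.subtypePiEquivPi (p := fun (i : Fin r) (g : Fin N → Fin (n (i.val + 1))) =>
      ∀ a, (Finset.univ.filter fun k => g k = a).card = N / n (i.val + 1))
  have hcard : ((Fintype.card {f : ∀ i : Fin r, Fin N → Fin (n (i.val + 1)) //
        ∀ (i : Fin r) (a : Fin (n (i.val + 1))),
          (Finset.univ.filter fun k => f i k = a).card = N / n (i.val + 1)} : ℕ) : ℚ)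
      = ((Fintype.card (∀ i : Fin r, Bal N (n (i.val + 1)) (N / n (i.val + 1))) : ℕ) : ℚ) := by
    exact_mod_cast congrArg (Nat.cast : ℕ → ℚ) (Fintype.card_congr e)
  have hsum : ∑ f : {f : ∀ i : Fin r, Fin N → Fin (n (i.val + 1)) //
        ∀ (i : Fin r) (a : Fin (n (i.val + 1))),
          (Finset.univ.filter fun k => f i k = a).card = N / n (i.val + 1)},
        (((Finset.univ.filter fun j : Fin N =>
            ∀ i : Fin r, f.1 i j = v i).card : ℚ)
          - (N : ℚ) / ∏ i : Fin r, (n (i.val + 1) : ℚ)) ^ 2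
      = ∑ p : ∀ i : Fin r, Bal N (n (i.val + 1)) (N / n (i.val + 1)),
        (((Finset.univ.filter fun j : Fin N =>
            ∀ i : Fin r, (p i).1 j = v i).card : ℚ)
          - (N : ℚ) / ∏ i : Fin r, (n (i.val + 1) : ℚ)) ^ 2 :=
    Fintype.sum_equiv e _ _ (fun f => rfl)
  rw [hsum, hcard,
    variance_eq r (fun i => n (i.val + 1)) (fun i => N / n (i.val + 1)) v N hνpos hμν hμ2 hN2]
  exact final_bound r (fun i => n (i.val + 1)) (fun i => N / n (i.val + 1)) N hνpos hμν hμ2 hN2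
end

section
/- Let r ≥ 1 and let n_1, …, n_r be positive integers, and let N be a positive integer divisible by n_1 and by n_{i−1}·n_i for each 2 ≤ i ≤ r, with N/n_1 ≥ 2 and N/(n_{i−1} n_i) ≥ 2 for all 2 ≤ i ≤ r. Let T be the set of tuples f = (f_1, …, f_r), f_i : Fin N → Fin n_i, such that every fiber of f_1 has exactly N/n_1 elements, and for each 2 ≤ i ≤ r and every a ∈ Fin n_{i−1}, b ∈ Fin n_i, the set { j : f_{i−1}(j) = a and f_i(j) = b } has exactly N/(n_{i−1} n_i) elements. Fix a label v and two distinct balls j, k ∈ Fin N. Then the number of f ∈ T with f_i(j) = v_i and f_i(k) = v_i for all i equals ( (N−2)! / ( (N/n_1 − 2)! ((N/n_1)!)^{n_1 − 1} ) ) · ∏_{i=2}^r ( (N/n_{i−1} − 2)! / ( (N/(n_{i−1}n_i) − 2)! ((N/(n_{i−1}n_i))!)^{n_i − 1} ) ) · [ (N/n_{i−1})! / ((N/(n_{i−1} n_i))!)^{n_i} ]^{n_{i−1} − 1}. -/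
open Finset

section Machinery

variable {α β γ : Type*}

/-- The fiber of `Sigma.fst` over `b` is `X b`. -/
def sigmaFstFiber (X : β → Type*) (b : β) : X b ≃ {x : Σ b', X b' // x.1 = b} where
  toFun x := ⟨⟨b, x⟩, rfl⟩
  invFun p := p.2 ▸ p.1.2
  left_inv x := rfl
  right_inv p := by rcases p with ⟨⟨b', x⟩, h⟩; subst h; rfl

/-- Families of equivalences correspond to fst-preserving equivalences of sigma types. -/
def piEquivSigmaFstPreserving (X Y : β → Type*) :
    ((b : β) → X b ≃ Y b) ≃ {e : (Σ b, X b) ≃ Σ b, Y b // ∀ x, (e x).1 = x.1} where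
  toFun E := ⟨Equiv.sigmaCongrRight E, fun x => rfl⟩
  invFun e b := (sigmaFstFiber X b).trans ((e.1.subtypeEquiv (fun x => by
      constructor
      · intro h; rw [e.2, h]
      · intro h; rw [← e.2 x, h])).trans (sigmaFstFiber Y b).symm)
  left_inv E := by
    funext b
    apply Equiv.ext
    intro x
    rfl
  right_inv := fun ⟨e, he⟩ => by
    apply Subtype.ext
    apply Equiv.ext
    rintro ⟨b, xx⟩
    show (⟨b, _⟩ : Σ b, Y b) = e ⟨b, xx⟩
    refine Sigma.ext (he ⟨b, xx⟩).symm ?_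
    exact eqRec_heq _ _

/-- For `f : α → β`, equivalences `α ≃ Σ b, Y b` lying over `f` correspond to
fst-preserving equivalences out of the sigma of fibers of `f`. -/
def overEquiv (f : α → β) (Y : β → Type*) :
    {e : α ≃ Σ b, Y b // ∀ a, (e a).1 = f a} ≃
      {e : (Σ b, {a // f a = b}) ≃ Σ b, Y b // ∀ x, (e x).1 = x.1} :=
  Equiv.subtypeEquiv
    (Equiv.equivCongr (Equiv.sigmaFiberEquiv f) (Equiv.refl _)).symm
    (by
      intro e
      constructor
      · intro h x
        have : ((Equiv.equivCongr (Equiv.sigmaFiberEquiv f) (Equiv.refl _)).symm e) x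
            = e ((Equiv.sigmaFiberEquiv f) x) := rfl
        rw [this, h]
        exact x.2.2
      · intro h a
        have := h ⟨f a, a, rfl⟩
        exact this)

lemma card_equiv_fin (X : Type*) [Fintype X] [DecidableEq X] (m : ℕ) :
    Fintype.card (X ≃ Fin m) = if Fintype.card X = m then m.factorial else 0 := by
  split
  · next h => rw [Fintype.card_equiv (Fintype.equivFinOfCardEq h), h]
  · next h =>
      rw [Fintype.card_eq_zero_iff]
      exact ⟨fun e => h (by simpa using Fintype.card_congr e)⟩

lemma prod_ite_all [Fintype β] {P : β → Prop} [DecidablePred P] (K : β → ℕ) :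
    (∏ b, if P b then K b else 0) = if (∀ b, P b) then ∏ b, K b else 0 := by
  by_cases h : ∀ b, P b
  · rw [if_pos h]
    exact Finset.prod_congr rfl fun b _ => if_pos (h b)
  · rw [if_neg h]
    push_neg at h
    obtain ⟨b, hb⟩ := h
    exact Finset.prod_eq_zero (mem_univ b) (if_neg hb)

/-- Master counting lemma: the number of functions with prescribed fiber sizes,
in multiplication form. -/
lemma cardM0 [Fintype α] [DecidableEq α] [Fintype β] [DecidableEq β]
    (c : β → ℕ) (hc : ∑ b, c b = Fintype.card α) :
    Fintype.card {f : α → β // ∀ b, (univ.filter fun a => f a = b).card = c b} *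
      ∏ b, (c b).factorial = (Fintype.card α).factorial := by
  classical
  have hcard : Fintype.card α = Fintype.card (Σ b, Fin (c b)) := by
    simp [Fintype.card_sigma, hc]
  have key : ∀ f : α → β,
      Fintype.card {e : α ≃ Σ b, Fin (c b) // ∀ a, (e a).1 = f a}
        = if (∀ b, (univ.filter fun a => f a = b).card = c b)
            then ∏ b, (c b).factorial else 0 := by
    intro f
    rw [Fintype.card_congr ((overEquiv f _).trans
      (piEquivSigmaFstPreserving (fun b => {a // f a = b}) (fun b => Fin (c b))).symm)]
    rw [Fintype.card_pi]
    have : ∀ b : β, Fintype.card ({a // f a = b} ≃ Fin (c b))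
        = if (univ.filter fun a => f a = b).card = c b then (c b).factorial else 0 := by
      intro b
      rw [card_equiv_fin, Fintype.card_subtype]
    rw [Finset.prod_congr rfl fun b _ => this b, prod_ite_all]
  have main : (Fintype.card α).factorial
      = ∑ f : α → β, Fintype.card {e : α ≃ Σ b, Fin (c b) // ∀ a, (e a).1 = f a} := by
    rw [← Fintype.card_equiv (Fintype.equivOfCardEq hcard)]
    rw [Fintype.card_congr (Equiv.sigmaFiberEquiv
      (fun e : α ≃ Σ b, Fin (c b) => fun a => (e a).1)).symm]
    rw [Fintype.card_sigma]
    refine Finset.sum_congr rfl fun f _ => Fintype.card_congr (Equiv.subtypeEquiv (Equiv.refl _) ?_)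
    intro e
    simp [funext_iff]
  rw [main]
  rw [Finset.sum_congr rfl fun f _ => key f]
  rw [← Finset.sum_filter]
  rw [Finset.sum_const, smul_eq_mul]
  rw [Fintype.card_subtype]


/-- Counting fibers after removing the two marked points. -/
lemma fiber_card_split [Fintype α] [DecidableEq α] [DecidableEq β]
    (j k : α) (hjk : j ≠ k) (b₀ : β) (f : α → β) (hfj : f j = b₀) (hfk : f k = b₀) (b : β) :
    (univ.filter fun a : α => f a = b).card
      = (univ.filter fun a : {a : α // ¬(a = j ∨ a = k)} => f a.1 = b).card
        + (if b = b₀ then 2 else 0) := by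
  classical
  have hsub : (univ.filter fun a : {a : α // ¬(a = j ∨ a = k)} => f a.1 = b).card
      = (univ.filter fun a : α => ¬(a = j ∨ a = k) ∧ f a = b).card := by
    rw [← Fintype.card_subtype, ← Fintype.card_subtype]
    exact Fintype.card_congr (Equiv.subtypeSubtypeEquivSubtypeInter
      (fun a => ¬(a = j ∨ a = k)) (fun a => f a = b))
  rw [hsub]
  by_cases hb : b = b₀
  · subst hb
    rw [if_pos rfl]
    have hset : (univ.filter fun a : α => f a = b)
        = insert j (insert k (univ.filter fun a : α => ¬(a = j ∨ a = k) ∧ f a = b)) := by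
      ext a
      simp only [mem_filter, mem_univ, true_and, mem_insert]
      constructor
      · intro h
        by_cases h1 : a = j
        · exact Or.inl h1
        · by_cases h2 : a = k
          · exact Or.inr (Or.inl h2)
          · exact Or.inr (Or.inr ⟨by tauto, h⟩)
      · rintro (rfl | rfl | ⟨-, h⟩) <;> [exact hfj; exact hfk; exact h]
    have hkS : k ∉ (univ.filter fun a : α => ¬(a = j ∨ a = k) ∧ f a = b) := by
      intro hmem
      rw [mem_filter] at hmem
      exact hmem.2.1 (Or.inr rfl)
    have hjS : j ∉ insert k (univ.filter fun a : α => ¬(a = j ∨ a = k) ∧ f a = b) := by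
      intro hmem
      rw [mem_insert] at hmem
      rcases hmem with h | hmem
      · exact hjk h
      · rw [mem_filter] at hmem
        exact hmem.2.1 (Or.inl rfl)
    rw [hset, card_insert_of_notMem hjS, card_insert_of_notMem hkS]
  · rw [if_neg hb, Nat.add_zero]
    congr 1
    ext a
    simp only [mem_filter, mem_univ, true_and]
    constructor
    · intro h
      refine ⟨?_, h⟩
      rintro (rfl | rfl)
      · exact hb (hfj.symm.trans h).symm
      · exact hb (hfk.symm.trans h).symm
    · exact fun h => h.2

/-- Marked-points version of the master counting lemma. -/
lemma cardM [Fintype α] [DecidableEq α] [Fintype β] [DecidableEq β]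
    (c : β → ℕ) (hc : ∑ b, c b = Fintype.card α) (j k : α) (hjk : j ≠ k)
    (b₀ : β) (h2 : 2 ≤ c b₀) :
    Fintype.card {f : α → β //
        (∀ b, (univ.filter fun a => f a = b).card = c b) ∧ f j = b₀ ∧ f k = b₀} *
      ((c b₀ - 2).factorial * ∏ b ∈ univ.erase b₀, (c b).factorial)
      = (Fintype.card α - 2).factorial := by
  classical
  set c' : β → ℕ := fun b => if b = b₀ then c b - 2 else c b with hc'
  have hcardα' : Fintype.card {a : α // ¬(a = j ∨ a = k)} = Fintype.card α - 2 := by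
    rw [Fintype.card_subtype]
    have : (univ.filter fun a : α => ¬(a = j ∨ a = k)) = univ \ {j, k} := by
      ext a; simp [not_or]
    rw [this, card_sdiff_of_subset (by simp)]
    congr 1
    rw [card_insert_of_notMem (by simp [hjk]), card_singleton]
  have hsum : ∑ b, c' b = Fintype.card {a : α // ¬(a = j ∨ a = k)} := by
    have h1 : ∑ b ∈ univ.erase b₀, c' b + c' b₀ = ∑ b, c' b :=
      Finset.sum_erase_add _ _ (mem_univ b₀)
    have h2' : ∑ b ∈ univ.erase b₀, c b + c b₀ = ∑ b, c b :=
      Finset.sum_erase_add _ _ (mem_univ b₀)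
    have h3 : ∑ b ∈ univ.erase b₀, c' b = ∑ b ∈ univ.erase b₀, c b :=
      Finset.sum_congr rfl fun b hb => by
        simp [hc', (Finset.mem_erase.mp hb).1]
    have h4 : c' b₀ = c b₀ - 2 := by simp [hc']
    omega
  have hprod : ∏ b, (c' b).factorial
      = (c b₀ - 2).factorial * ∏ b ∈ univ.erase b₀, (c b).factorial := by
    rw [← Finset.prod_erase_mul _ _ (mem_univ b₀)]
    rw [Finset.prod_congr rfl (fun b hb => by
      simp [hc', (Finset.mem_erase.mp hb).1] : ∀ b ∈ univ.erase b₀,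
        (c' b).factorial = (c b).factorial)]
    simp [hc', mul_comm]
  have E : {f : α → β //
        (∀ b, (univ.filter fun a => f a = b).card = c b) ∧ f j = b₀ ∧ f k = b₀}
      ≃ {g : {a : α // ¬(a = j ∨ a = k)} → β // ∀ b, (univ.filter fun a => g a = b).card = c' b} := by
    refine ⟨fun f => ⟨fun a => f.1 a.1, ?_⟩, fun g => ⟨fun a =>
      if h : a = j ∨ a = k then b₀ else g.1 ⟨a, h⟩, ?_, ?_, ?_⟩, ?_, ?_⟩
    · intro b
      have hcb := f.2.1 b
      have hsplit := fiber_card_split j k hjk b₀ f.1 f.2.2.1 f.2.2.2 b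
      simp only [hc']
      by_cases hb : b = b₀
      · rw [if_pos hb] at hsplit ⊢
        have h2b : 2 ≤ c b := hb ▸ h2
        omega
      · rw [if_neg hb] at hsplit ⊢
        omega
    · intro b
      have hm1 : (fun a => if h : a = j ∨ a = k then b₀ else g.1 ⟨a, h⟩) j = b₀ :=
        dif_pos (Or.inl rfl)
      have hm2 : (fun a => if h : a = j ∨ a = k then b₀ else g.1 ⟨a, h⟩) k = b₀ :=
        dif_pos (Or.inr rfl)
      have hsplit := fiber_card_split j k hjk b₀
        (fun a => if h : a = j ∨ a = k then b₀ else g.1 ⟨a, h⟩) hm1 hm2 b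
      beta_reduce at hsplit
      rw [hsplit]
      have heq : (univ.filter fun a : {a : α // ¬(a = j ∨ a = k)} =>
          (if h : a.1 = j ∨ a.1 = k then b₀ else g.1 ⟨a.1, h⟩) = b)
          = (univ.filter fun a : {a : α // ¬(a = j ∨ a = k)} => g.1 a = b) := by
        ext a
        simp only [mem_filter, mem_univ, true_and, dif_neg a.2]
      rw [heq, g.2 b]
      simp only [hc']
      by_cases hb : b = b₀
      · rw [if_pos hb, if_pos hb]
        have : 2 ≤ c b := hb ▸ h2
        omega
      · rw [if_neg hb, if_neg hb]
        omega
    · exact dif_pos (Or.inl rfl)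
    · exact dif_pos (Or.inr rfl)
    · rintro ⟨f, hf, hfj, hfk⟩
      apply Subtype.ext
      funext a
      simp only
      split
      · rename_i h
        rcases h with rfl | rfl
        · exact hfj.symm
        · exact hfk.symm
      · rfl
    · rintro ⟨g, hg⟩
      apply Subtype.ext
      funext a
      simp only [dif_neg a.2]
  have := cardM0 (α := {a : α // ¬(a = j ∨ a = k)}) c' hsum
  rw [Fintype.card_congr E, hprod.symm, this, hcardα']

/-- Division form, uniform fiber sizes. -/
lemma cardM0_uniform_div [Fintype α] [DecidableEq α] [Fintype β] [DecidableEq β]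
    (q : ℕ) (hq : q * Fintype.card β = Fintype.card α) :
    Fintype.card {f : α → β // ∀ b, (univ.filter fun a => f a = b).card = q}
      = (Fintype.card α).factorial / q.factorial ^ Fintype.card β := by
  have h := cardM0 (α := α) (β := β) (fun _ => q)
    (by rw [Finset.sum_const, smul_eq_mul, card_univ, mul_comm]; exact hq)
  rw [Finset.prod_const, card_univ] at h
  exact (Nat.div_eq_of_eq_mul_left (pow_pos q.factorial_pos _) h.symm).symm

/-- Division form, uniform fiber sizes, two marked points. -/
lemma cardM_uniform_div [Fintype α] [DecidableEq α] [Fintype β] [DecidableEq β]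
    (q : ℕ) (hq : q * Fintype.card β = Fintype.card α)
    (j k : α) (hjk : j ≠ k) (b₀ : β) (h2 : 2 ≤ q) :
    Fintype.card {f : α → β //
        (∀ b, (univ.filter fun a => f a = b).card = q) ∧ f j = b₀ ∧ f k = b₀}
      = (Fintype.card α - 2).factorial /
          ((q - 2).factorial * q.factorial ^ (Fintype.card β - 1)) := by
  have h := cardM (α := α) (β := β) (fun _ => q)
    (by rw [Finset.sum_const, smul_eq_mul, card_univ, mul_comm]; exact hq) j k hjk b₀ h2
  rw [Finset.prod_const, card_erase_of_mem (mem_univ b₀), card_univ] at h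
  exact (Nat.div_eq_of_eq_mul_left
    (Nat.mul_pos (Nat.factorial_pos _) (pow_pos q.factorial_pos _)) h.symm).symm

end Machinery

section Machinery2

variable {α β γ : Type*}

lemma joint_filter_card [Fintype α] [DecidableEq α] [DecidableEq β] [DecidableEq γ]
    (g : α → β) (h : α → γ) (a : β) (b : γ) :
    (univ.filter fun m : α => g m = a ∧ h m = b).card
      = (univ.filter fun x : {m : α // g m = a} => h x.1 = b).card := by
  rw [← Fintype.card_subtype, ← Fintype.card_subtype]
  exact (Fintype.card_congr (Equiv.subtypeSubtypeEquivSubtypeInter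
    (fun m => g m = a) (fun m => h m = b))).symm

lemma fiber_card_of_joint [Fintype α] [DecidableEq α] [Fintype β] [DecidableEq β]
    [DecidableEq γ] (g : α → β) (h : α → γ) (q : ℕ)
    (hj : ∀ a b, (univ.filter fun m => g m = a ∧ h m = b).card = q) (b : γ) :
    (univ.filter fun m => h m = b).card = Fintype.card β * q := by
  have hper : ∀ a : β, ((univ.filter fun m => h m = b).filter fun m => g m = a).card = q := by
    intro a
    rw [Finset.filter_filter, ← hj a b]
    congr 1
    ext m
    simp only [mem_filter, mem_univ, true_and]
    tauto
  have hsum := Finset.card_eq_sum_card_fiberwise (f := g)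
    (s := univ.filter fun m => h m = b) (t := univ) (fun x _ => mem_univ _)
  rw [hsum, Finset.sum_congr rfl fun a _ => hper a, Finset.sum_const, card_univ, smul_eq_mul]

/-- Splitting a function along the fibers of `g`. -/
def fiberSplitEquiv [DecidableEq β] (g : α → β) (γ : Type*) :
    (α → γ) ≃ (∀ a : β, {m : α // g m = a} → γ) where
  toFun h a x := h x.1
  invFun H m := H (g m) ⟨m, rfl⟩
  left_inv h := rfl
  right_inv H := by
    funext a x
    rcases x with ⟨m, hm⟩
    subst hm
    rfl

/-- Counting refinements `h` of `g` with uniform joint fiber sizes and two marked points. -/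
lemma cardC [Fintype α] [DecidableEq α] [Fintype β] [DecidableEq β]
    [Fintype γ] [DecidableEq γ]
    (g : α → β) (s q : ℕ) (hg : ∀ a, (univ.filter fun m => g m = a).card = s)
    (hq : q * Fintype.card γ = s) (h2 : 2 ≤ q)
    (j k : α) (hjk : j ≠ k) (a₀ : β) (hgj : g j = a₀) (hgk : g k = a₀) (b₀ : γ) :
    Fintype.card {h : α → γ //
        (∀ a b, (univ.filter fun m => g m = a ∧ h m = b).card = q) ∧ h j = b₀ ∧ h k = b₀}
      = ((s - 2).factorial / ((q - 2).factorial * q.factorial ^ (Fintype.card γ - 1))) *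
        (s.factorial / q.factorial ^ Fintype.card γ) ^ (Fintype.card β - 1) := by
  classical
  have hfibcard : ∀ a : β, Fintype.card {m : α // g m = a} = s := fun a => by
    rw [Fintype.card_subtype]; exact hg a
  -- step 1: split along fibers of g
  have E0 : {h : α → γ //
        (∀ a b, (univ.filter fun m => g m = a ∧ h m = b).card = q) ∧ h j = b₀ ∧ h k = b₀}
      ≃ {H : ∀ a : β, {m : α // g m = a} → γ //
          (∀ a b, (univ.filter fun x : {m : α // g m = a} => H a x = b).card = q) ∧
            H a₀ ⟨j, hgj⟩ = b₀ ∧ H a₀ ⟨k, hgk⟩ = b₀} := by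
    refine Equiv.subtypeEquiv (fiberSplitEquiv g γ) fun h => ?_
    show _ ↔ ((∀ a b, (univ.filter fun x : {m : α // g m = a} => h x.1 = b).card = q) ∧
      h j = b₀ ∧ h k = b₀)
    constructor
    · rintro ⟨h1, h2', h3⟩
      exact ⟨fun a b => by rw [← joint_filter_card g h a b]; exact h1 a b, h2', h3⟩
    · rintro ⟨h1, h2', h3⟩
      exact ⟨fun a b => by rw [joint_filter_card g h a b]; exact h1 a b, h2', h3⟩
  -- step 2: split off the fiber over a₀
  have E1 : {H : ∀ a : β, {m : α // g m = a} → γ //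
          (∀ a b, (univ.filter fun x : {m : α // g m = a} => H a x = b).card = q) ∧
            H a₀ ⟨j, hgj⟩ = b₀ ∧ H a₀ ⟨k, hgk⟩ = b₀}
      ≃ {x : ({m : α // g m = a₀} → γ) ×
            (∀ a' : {a : β // a ≠ a₀}, {m : α // g m = a'.1} → γ) //
          ((∀ b, (univ.filter fun y : {m : α // g m = a₀} => x.1 y = b).card = q) ∧
            x.1 ⟨j, hgj⟩ = b₀ ∧ x.1 ⟨k, hgk⟩ = b₀) ∧
          (∀ a' : {a : β // a ≠ a₀}, ∀ b,
            (univ.filter fun y : {m : α // g m = a'.1} => x.2 a' y = b).card = q)} := by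
    refine Equiv.subtypeEquiv (Equiv.piSplitAt a₀ (fun a => {m : α // g m = a} → γ)) fun H => ?_
    constructor
    · rintro ⟨h1, h2', h3⟩
      exact ⟨⟨fun b => h1 a₀ b, h2', h3⟩, fun a' b => h1 a'.1 b⟩
    · rintro ⟨⟨h1, h2', h3⟩, h4⟩
      refine ⟨fun a b => ?_, h2', h3⟩
      by_cases ha : a = a₀
      · subst ha; exact h1 b
      · exact h4 ⟨a, ha⟩ b
  rw [Fintype.card_congr (E0.trans (E1.trans (Equiv.subtypeProdEquivProd
    (p := fun h₀ : {m : α // g m = a₀} → γ =>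
      (∀ b, (univ.filter fun y : {m : α // g m = a₀} => h₀ y = b).card = q) ∧
        h₀ ⟨j, hgj⟩ = b₀ ∧ h₀ ⟨k, hgk⟩ = b₀)
    (q := fun F : ∀ a' : {a : β // a ≠ a₀}, {m : α // g m = a'.1} → γ =>
      ∀ a' : {a : β // a ≠ a₀}, ∀ b,
        (univ.filter fun y : {m : α // g m = a'.1} => F a' y = b).card = q))))]
  rw [Fintype.card_prod]
  -- first factor
  have hF1 : Fintype.card {h₀ : {m : α // g m = a₀} → γ //
        (∀ b, (univ.filter fun y : {m : α // g m = a₀} => h₀ y = b).card = q) ∧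
          h₀ ⟨j, hgj⟩ = b₀ ∧ h₀ ⟨k, hgk⟩ = b₀}
      = (s - 2).factorial / ((q - 2).factorial * q.factorial ^ (Fintype.card γ - 1)) := by
    have := cardM_uniform_div (α := {m : α // g m = a₀}) (β := γ) q
      (by rw [hfibcard]; exact hq) ⟨j, hgj⟩ ⟨k, hgk⟩
      (fun h => hjk (congrArg Subtype.val h)) b₀ h2
    rw [this, hfibcard]
  -- second factor
  have hF2 : Fintype.card {F : ∀ a' : {a : β // a ≠ a₀}, {m : α // g m = a'.1} → γ //
        ∀ a' : {a : β // a ≠ a₀}, ∀ b,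
          (univ.filter fun y : {m : α // g m = a'.1} => F a' y = b).card = q}
      = (s.factorial / q.factorial ^ Fintype.card γ) ^ (Fintype.card β - 1) := by
    rw [Fintype.card_congr (Equiv.subtypePiEquivPi
      (p := fun (a' : {a : β // a ≠ a₀}) (h' : {m : α // g m = a'.1} → γ) =>
        ∀ b, (univ.filter fun y : {m : α // g m = a'.1} => h' y = b).card = q))]
    rw [Fintype.card_pi]
    have hone : ∀ a' : {a : β // a ≠ a₀},
        Fintype.card {h' : {m : α // g m = a'.1} → γ //
          ∀ b, (univ.filter fun y : {m : α // g m = a'.1} => h' y = b).card = q}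
        = s.factorial / q.factorial ^ Fintype.card γ := by
      intro a'
      have := cardM0_uniform_div (α := {m : α // g m = a'.1}) (β := γ) q
        (by rw [hfibcard]; exact hq)
      rw [this, hfibcard]
    rw [Finset.prod_congr rfl fun a' _ => hone a', Finset.prod_const, card_univ]
    congr 1
    rw [Fintype.card_subtype]
    have : (univ.filter fun a : β => a ≠ a₀) = univ.erase a₀ := by
      ext a; simp [Finset.mem_erase, and_comm]
    rw [this, card_erase_of_mem (mem_univ a₀), card_univ]
  rw [hF1, hF2]

end Machinery2

section Chain

lemma div_chain {a b Nv : ℕ} (ha : 0 < a) (hb : 0 < b) (h : a * b ∣ Nv) :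
    a * (Nv / (a * b)) = Nv / b := by
  obtain ⟨t, rfl⟩ := h
  rw [Nat.mul_div_cancel_left t (Nat.mul_pos ha hb),
    show a * b * t = b * (a * t) by ring, Nat.mul_div_cancel_left _ hb]

lemma div_mul_div {a b Nv : ℕ} (ha : 0 < a) (hb : 0 < b) (h : a * b ∣ Nv) :
    Nv / (a * b) * b = Nv / a := by
  obtain ⟨t, rfl⟩ := h
  rw [Nat.mul_div_cancel_left t (Nat.mul_pos ha hb),
    show a * b * t = a * (b * t) by ring, Nat.mul_div_cancel_left _ ha]
  exact Nat.mul_comm t b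

/-- The chain condition of the problem statement. -/
abbrev BigCond (n : ℕ → ℕ) (N : ℕ) (r : ℕ) (hr : 1 ≤ r)
    (v : ∀ i : Fin r, Fin (n (i.val + 1))) (j k : Fin N)
    (f : ∀ i : Fin r, Fin N → Fin (n (i.val + 1))) : Prop :=
  ((∀ a : Fin (n 1),
      (Finset.univ.filter fun m => f ⟨0, hr⟩ m = a).card = N / n 1) ∧
    (∀ i : Fin r, 1 ≤ i.val →
      ∀ (a : Fin (n (i.val - 1 + 1))) (b : Fin (n (i.val + 1))),
        (Finset.univ.filter fun m =>
            f ⟨i.val - 1, lt_of_le_of_lt (Nat.sub_le _ _) i.isLt⟩ m = a ∧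
              f i m = b).card = N / (n i.val * n (i.val + 1)))) ∧
  (∀ i : Fin r, f i j = v i ∧ f i k = v i)

/-- The condition on the last-round function. -/
abbrev QCond (n : ℕ → ℕ) (N : ℕ) (r : ℕ) (prevpf : r - 1 < r)
    (vlast : Fin (n (r + 1))) (j k : Fin N)
    (y : ∀ i : Fin r, Fin N → Fin (n (i.val + 1)))
    (h : Fin N → Fin (n (r + 1))) : Prop :=
  (∀ (a : Fin (n (r - 1 + 1))) (b : Fin (n (r + 1))),
    (Finset.univ.filter fun m => y ⟨r - 1, prevpf⟩ m = a ∧ h m = b).card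
      = N / (n r * n (r + 1))) ∧
  h j = vlast ∧ h k = vlast

/-- Appending a last-round function to a chain. -/
def chainSnoc (n : ℕ → ℕ) (N r : ℕ)
    (y : ∀ i : Fin r, Fin N → Fin (n (i.val + 1)))
    (h : Fin N → Fin (n (r + 1))) :
    ∀ i : Fin (r + 1), Fin N → Fin (n (i.val + 1)) :=
  Fin.snoc (α := fun i : Fin (r + 1) => Fin N → Fin (n (i.val + 1))) y h

lemma chainSnoc_lt (n : ℕ → ℕ) (N r : ℕ)
    (y : ∀ i : Fin r, Fin N → Fin (n (i.val + 1)))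
    (h : Fin N → Fin (n (r + 1))) (c : ℕ) (hc : c < r) (pf : c < r + 1) :
    chainSnoc n N r y h ⟨c, pf⟩ = y ⟨c, hc⟩ := by
  exact Fin.snoc_castSucc (α := fun i : Fin (r + 1) => Fin N → Fin (n (i.val + 1)))
    (p := y) (x := h) (i := ⟨c, hc⟩)

lemma chainSnoc_last (n : ℕ → ℕ) (N r : ℕ)
    (y : ∀ i : Fin r, Fin N → Fin (n (i.val + 1)))
    (h : Fin N → Fin (n (r + 1))) :
    chainSnoc n N r y h (Fin.last r) = h := by
  exact Fin.snoc_last (α := fun i : Fin (r + 1) => Fin N → Fin (n (i.val + 1))) _ _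

lemma chainSnoc_var (n : ℕ → ℕ) (N r : ℕ)
    (y : ∀ i : Fin r, Fin N → Fin (n (i.val + 1)))
    (h : Fin N → Fin (n (r + 1))) (i : Fin (r + 1)) (hlt : i.val < r) :
    chainSnoc n N r y h i = y ⟨i.val, hlt⟩ := by
  exact Fin.snoc_castSucc (α := fun i : Fin (r + 1) => Fin N → Fin (n (i.val + 1)))
    (p := y) (x := h) (i := ⟨i.val, hlt⟩)

/-- The product decomposition of chains of length `r+1`. -/
def chainProdEquiv (n : ℕ → ℕ) (N r : ℕ) :
    ((∀ i : Fin r, Fin N → Fin (n (i.val + 1))) × (Fin N → Fin (n (r + 1)))) ≃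
      (∀ i : Fin (r + 1), Fin N → Fin (n (i.val + 1))) where
  toFun x := chainSnoc n N r x.1 x.2
  invFun f := (fun i => f i.castSucc, f (Fin.last r))
  left_inv x := by
    refine Prod.ext ?_ ?_
    · funext i
      exact Fin.snoc_castSucc (α := fun i : Fin (r + 1) => Fin N → Fin (n (i.val + 1)))
        (p := x.1) (x := x.2) (i := i)
    · exact Fin.snoc_last (α := fun i : Fin (r + 1) => Fin N → Fin (n (i.val + 1))) _ _
  right_inv f := by
    exact Fin.snoc_init_self (α := fun i : Fin (r + 1) => Fin N → Fin (n (i.val + 1))) f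

end Chain

lemma card_congr_refl {α : Type*} (F1 F2 : Fintype α) :
    @Fintype.card α F1 = @Fintype.card α F2 := by
  congr 1
  exact Subsingleton.elim _ _

lemma filter_card_iff {α : Type*} [Fintype α] {p q : α → Prop}
    [DecidablePred p] [DecidablePred q] (h : ∀ m, p m ↔ q m) :
    (Finset.univ.filter p).card = (Finset.univ.filter q).card := by
  rw [Finset.filter_congr (fun m _ => h m)]

/-- Chains of length one are single functions. -/
def oneChainEquiv (n : ℕ → ℕ) (N : ℕ) :
    (∀ i : Fin 1, Fin N → Fin (n (i.val + 1))) ≃ (Fin N → Fin (n 1)) where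
  toFun f := f ⟨0, Nat.one_pos⟩
  invFun g i := Fin.cases (motive := fun i : Fin 1 => Fin N → Fin (n (i.val + 1)))
    g (fun i0 => i0.elim0) i
  left_inv f := by
    funext i
    induction i using Fin.cases with
    | zero => rfl
    | succ i0 => exact i0.elim0
  right_inv g := rfl

open Finset in
lemma secondWay_aux (n : ℕ → ℕ) (N : ℕ) (hdvd1 : n 1 ∣ N) (hsize1 : 2 ≤ N / n 1) :
    ∀ (r : ℕ), 1 ≤ r →
      (∀ i ∈ Finset.Icc 1 r, 0 < n i) →
      (∀ i ∈ Finset.Icc 2 r, n (i - 1) * n i ∣ N) →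
      (∀ i ∈ Finset.Icc 2 r, 2 ≤ N / (n (i - 1) * n i)) →
      ∀ (v : ∀ i : Fin r, Fin (n (i.val + 1))) (j k : Fin N), j ≠ k →
      ∀ (hr : 1 ≤ r),
      Fintype.card {f : ∀ i : Fin r, Fin N → Fin (n (i.val + 1)) //
          BigCond n N r hr v j k f} =
        ((N - 2).factorial /
            ((N / n 1 - 2).factorial * (N / n 1).factorial ^ (n 1 - 1))) *
          ∏ i ∈ Finset.Icc 2 r,
            ((N / n (i - 1) - 2).factorial /
                ((N / (n (i - 1) * n i) - 2).factorial *
                  (N / (n (i - 1) * n i)).factorial ^ (n i - 1))) *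
              ((N / n (i - 1)).factorial /
                  (N / (n (i - 1) * n i)).factorial ^ n i) ^ (n (i - 1) - 1) := by
  intro r hr0
  induction r, hr0 using Nat.le_induction with
  | base =>
    intro hn hdvd hsize v j k hjk hr
    rw [show Finset.Icc 2 1 = (∅ : Finset ℕ) from Finset.Icc_eq_empty (by omega),
      Finset.prod_empty, mul_one]
    have E : {f : ∀ i : Fin 1, Fin N → Fin (n (i.val + 1)) // BigCond n N 1 hr v j k f} ≃
        {g : Fin N → Fin (n 1) //
          (∀ a, (Finset.univ.filter fun m => g m = a).card = N / n 1) ∧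
            g j = v ⟨0, hr⟩ ∧ g k = v ⟨0, hr⟩} := by
      refine Equiv.subtypeEquiv (oneChainEquiv n N) fun f => ?_
      constructor
      · rintro ⟨⟨c1, -⟩, c3⟩
        exact ⟨c1, (c3 ⟨0, hr⟩).1, (c3 ⟨0, hr⟩).2⟩
      · rintro ⟨c1, m1, m2⟩
        refine ⟨⟨c1, ?_⟩, ?_⟩
        · intro i hi
          exact absurd (Nat.lt_of_lt_of_le i.isLt hi) (lt_irrefl _)
        · intro i
          induction i using Fin.cases with
          | zero => exact ⟨m1, m2⟩
          | succ i0 => exact i0.elim0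
    rw [Fintype.card_congr E]
    have hcm := cardM_uniform_div (α := Fin N) (β := Fin (n 1)) (N / n 1)
      (by simp only [Fintype.card_fin]; exact Nat.div_mul_cancel hdvd1) j k hjk
      (v ⟨0, hr⟩) hsize1
    rw [Fintype.card_fin, Fintype.card_fin] at hcm
    exact (card_congr_refl _ _).trans hcm
  | succ r hrr IH =>
    intro hn hdvd hsize v j k hjk hr1
    classical
    have prevpf : r - 1 < r := by omega
    set v' : ∀ i : Fin r, Fin (n (i.val + 1)) := fun i => v i.castSucc with hv'
    have hBIG : ∀ (y : ∀ i : Fin r, Fin N → Fin (n (i.val + 1)))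
        (h : Fin N → Fin (n (r + 1))),
        BigCond n N (r + 1) hr1 v j k (chainSnoc n N r y h) ↔
          (BigCond n N r hrr v' j k y ∧
            QCond n N r prevpf (v (Fin.last r)) j k y h) := by
      intro y h
      constructor
      · rintro ⟨⟨c1, c2⟩, c3⟩
        refine ⟨⟨⟨?_, ?_⟩, ?_⟩, ?_, ?_, ?_⟩
        · intro a
          refine Eq.trans (filter_card_iff fun m => ?_) (c1 a)
          rw [congrFun (chainSnoc_lt n N r y h 0 (by omega) hr1) m]
        · intro i hi a b
          refine Eq.trans (filter_card_iff fun m => ?_)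
            (c2 (Fin.castSucc i) (by simpa using hi) a b)
          rw [congrFun (chainSnoc_var n N r y h (Fin.castSucc i)
            (by simpa using i.isLt)) m]
          rw [congrFun (chainSnoc_lt n N r y h ((Fin.castSucc i).val - 1)
            (by have := i.isLt; simp only [Fin.coe_castSucc]; omega)
            (lt_of_le_of_lt (Nat.sub_le _ _) (Fin.castSucc i).isLt)) m]
          exact Iff.rfl
        · intro i
          have hx1 := (c3 (Fin.castSucc i)).1
          have hx2 := (c3 (Fin.castSucc i)).2
          rw [congrFun (chainSnoc_var n N r y h (Fin.castSucc i)
            (by simpa using i.isLt)) j] at hx1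
          rw [congrFun (chainSnoc_var n N r y h (Fin.castSucc i)
            (by simpa using i.isLt)) k] at hx2
          exact ⟨hx1, hx2⟩
        · intro a b
          refine Eq.trans (filter_card_iff fun m => ?_)
            (c2 (Fin.last r) (by simpa using hrr) a b)
          rw [congrFun (chainSnoc_last n N r y h) m]
          rw [congrFun (chainSnoc_lt n N r y h ((Fin.last r).val - 1)
            (by simp only [Fin.val_last]; omega)
            (lt_of_le_of_lt (Nat.sub_le _ _) (Fin.last r).isLt)) m]
          exact Iff.rfl
        · have hx := (c3 (Fin.last r)).1
          rw [congrFun (chainSnoc_last n N r y h) j] at hx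
          exact hx
        · have hx := (c3 (Fin.last r)).2
          rw [congrFun (chainSnoc_last n N r y h) k] at hx
          exact hx
      · rintro ⟨⟨⟨c1, c2⟩, c3⟩, cq, mj, mk⟩
        refine ⟨⟨?_, ?_⟩, ?_⟩
        · intro a
          refine Eq.trans (filter_card_iff fun m => ?_) (c1 a)
          rw [congrFun (chainSnoc_lt n N r y h 0 (by omega) hr1) m]
        · intro i hi
          rcases Nat.lt_or_ge i.val r with hlt | hge
          · intro a b
            refine Eq.trans (filter_card_iff fun m => ?_) (c2 ⟨i.val, hlt⟩ hi a b)
            rw [congrFun (chainSnoc_var n N r y h i hlt) m]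
            rw [congrFun (chainSnoc_lt n N r y h (i.val - 1)
              (by omega) (lt_of_le_of_lt (Nat.sub_le _ _) i.isLt)) m]
          · have hieq : i = Fin.last r :=
              Fin.ext (by have := i.isLt; simp only [Fin.val_last]; omega)
            subst hieq
            intro a b
            refine Eq.trans (filter_card_iff fun m => ?_) (cq a b)
            rw [congrFun (chainSnoc_last n N r y h) m]
            rw [congrFun (chainSnoc_lt n N r y h ((Fin.last r).val - 1)
              (by simp only [Fin.val_last]; omega)
              (lt_of_le_of_lt (Nat.sub_le _ _) (Fin.last r).isLt)) m]
            exact Iff.rfl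
        · intro i
          rcases Nat.lt_or_ge i.val r with hlt | hge
          · constructor
            · rw [congrFun (chainSnoc_var n N r y h i hlt) j]
              exact (c3 ⟨i.val, hlt⟩).1
            · rw [congrFun (chainSnoc_var n N r y h i hlt) k]
              exact (c3 ⟨i.val, hlt⟩).2
          · have hieq : i = Fin.last r :=
              Fin.ext (by have := i.isLt; simp only [Fin.val_last]; omega)
            subst hieq
            constructor
            · rw [congrFun (chainSnoc_last n N r y h) j]
              exact mj
            · rw [congrFun (chainSnoc_last n N r y h) k]
              exact mk
    have E : {f : ∀ i : Fin (r + 1), Fin N → Fin (n (i.val + 1)) //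
          BigCond n N (r + 1) hr1 v j k f} ≃
        Σ y : ∀ i : Fin r, Fin N → Fin (n (i.val + 1)),
          {h : Fin N → Fin (n (r + 1)) //
            BigCond n N r hrr v' j k y ∧
              QCond n N r prevpf (v (Fin.last r)) j k y h} := by
      have e1 : {f : ∀ i : Fin (r + 1), Fin N → Fin (n (i.val + 1)) //
            BigCond n N (r + 1) hr1 v j k f} ≃
          {x : (∀ i : Fin r, Fin N → Fin (n (i.val + 1))) × (Fin N → Fin (n (r + 1))) //
            BigCond n N (r + 1) hr1 v j k (chainSnoc n N r x.1 x.2)} :=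
        (Equiv.subtypeEquiv (chainProdEquiv n N r) fun x => Iff.rfl).symm
      exact e1.trans ((Equiv.subtypeProdEquivSigmaSubtype
          (fun y h => BigCond n N (r + 1) hr1 v j k (chainSnoc n N r y h))).trans
        (Equiv.sigmaCongrRight fun y =>
          Equiv.subtypeEquiv (Equiv.refl _) fun h => hBIG y h))
    have key : ∀ y : ∀ i : Fin r, Fin N → Fin (n (i.val + 1)),
        Fintype.card {h : Fin N → Fin (n (r + 1)) //
            BigCond n N r hrr v' j k y ∧
              QCond n N r prevpf (v (Fin.last r)) j k y h}
          = if BigCond n N r hrr v' j k y then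
              ((N / n r - 2).factorial /
                ((N / (n r * n (r + 1)) - 2).factorial *
                  (N / (n r * n (r + 1))).factorial ^ (n (r + 1) - 1))) *
              ((N / n r).factorial /
                  (N / (n r * n (r + 1))).factorial ^ n (r + 1)) ^ (n r - 1)
            else 0 := by
      intro y
      by_cases hy : BigCond n N r hrr v' j k y
      · rw [if_pos hy]
        have hgfib : ∀ a : Fin (n (r - 1 + 1)),
            (Finset.univ.filter fun m => y ⟨r - 1, prevpf⟩ m = a).card = N / n r := by
          rcases Nat.lt_or_ge r 2 with hr2 | hr2
          · have hre : r = 1 := by omega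
            subst hre
            exact fun a => hy.1.1 a
          · intro a
            have hy2' : ∀ (c : ℕ) (hc1 : 1 ≤ c) (hcr : c < r),
                ∀ (a' : Fin (n (c - 1 + 1))) (b : Fin (n (c + 1))),
                  (Finset.univ.filter fun m =>
                      y ⟨c - 1, by omega⟩ m = a' ∧ y ⟨c, hcr⟩ m = b).card
                    = N / (n c * n (c + 1)) :=
              fun c hc1 hcr a' b => hy.1.2 ⟨c, hcr⟩ hc1 a' b
            have hfib := fiber_card_of_joint (y ⟨r - 1 - 1, by omega⟩) (y ⟨r - 1, prevpf⟩)
              (N / (n (r - 1) * n (r - 1 + 1)))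
              (fun a' b => hy2' (r - 1) (by omega) (by omega) a' b) a
            rw [hfib, Fintype.card_fin]
            rw [show r - 1 - 1 + 1 = r - 1 by omega, show r - 1 + 1 = r by omega]
            exact div_chain (hn (r - 1) (by rw [Finset.mem_Icc]; omega))
              (hn r (by rw [Finset.mem_Icc]; omega))
              (hdvd r (by rw [Finset.mem_Icc]; omega))
        have hq : (N / (n r * n (r + 1))) * Fintype.card (Fin (n (r + 1))) = N / n r := by
          rw [Fintype.card_fin]
          exact div_mul_div (hn r (by rw [Finset.mem_Icc]; omega))
            (hn (r + 1) (by rw [Finset.mem_Icc]; omega))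
            (hdvd (r + 1) (by rw [Finset.mem_Icc]; omega))
        have h2q : 2 ≤ N / (n r * n (r + 1)) := hsize (r + 1) (by rw [Finset.mem_Icc]; omega)
        have harith : ((N / n r - 2).factorial /
              ((N / (n r * n (r + 1)) - 2).factorial *
                (N / (n r * n (r + 1))).factorial ^ (Fintype.card (Fin (n (r + 1))) - 1))) *
            ((N / n r).factorial /
                (N / (n r * n (r + 1))).factorial ^ Fintype.card (Fin (n (r + 1)))) ^
              (Fintype.card (Fin (n (r - 1 + 1))) - 1)
            = ((N / n r - 2).factorial /
              ((N / (n r * n (r + 1)) - 2).factorial *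
                (N / (n r * n (r + 1))).factorial ^ (n (r + 1) - 1))) *
            ((N / n r).factorial /
                (N / (n r * n (r + 1))).factorial ^ n (r + 1)) ^ (n r - 1) := by
          rw [Fintype.card_fin, Fintype.card_fin, show r - 1 + 1 = r by omega]
        have e4 : {h : Fin N → Fin (n (r + 1)) //
              BigCond n N r hrr v' j k y ∧
                QCond n N r prevpf (v (Fin.last r)) j k y h} ≃
            {h : Fin N → Fin (n (r + 1)) //
              (∀ (a : Fin (n (r - 1 + 1))) (b : Fin (n (r + 1))),
                (Finset.univ.filter fun m =>
                    y ⟨r - 1, prevpf⟩ m = a ∧ h m = b).card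
                  = N / (n r * n (r + 1))) ∧
              h j = v (Fin.last r) ∧ h k = v (Fin.last r)} :=
          Equiv.subtypeEquiv (Equiv.refl _) fun h => and_iff_right hy
        have hc := cardC (α := Fin N) (β := Fin (n (r - 1 + 1))) (γ := Fin (n (r + 1)))
          (y ⟨r - 1, prevpf⟩) (N / n r) (N / (n r * n (r + 1))) hgfib hq h2q j k hjk
          (v' ⟨r - 1, prevpf⟩) (hy.2 ⟨r - 1, prevpf⟩).1 (hy.2 ⟨r - 1, prevpf⟩).2
          (v (Fin.last r))
        refine (Fintype.card_congr e4).trans ?_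
        convert hc.trans harith using 2
      · rw [if_neg hy, Fintype.card_eq_zero_iff]
        exact ⟨fun x => hy x.2.1⟩
    rw [Fintype.card_congr E, Fintype.card_sigma]
    rw [Finset.sum_congr rfl fun y _ => key y]
    rw [← Finset.sum_filter, Finset.sum_const, smul_eq_mul]
    have hcount : (Finset.univ.filter fun y : ∀ i : Fin r, Fin N → Fin (n (i.val + 1)) =>
        BigCond n N r hrr v' j k y).card
        = ((N - 2).factorial /
            ((N / n 1 - 2).factorial * (N / n 1).factorial ^ (n 1 - 1))) *
          ∏ i ∈ Finset.Icc 2 r,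
            ((N / n (i - 1) - 2).factorial /
                ((N / (n (i - 1) * n i) - 2).factorial *
                  (N / (n (i - 1) * n i)).factorial ^ (n i - 1))) *
              ((N / n (i - 1)).factorial /
                  (N / (n (i - 1) * n i)).factorial ^ n i) ^ (n (i - 1) - 1) := by
      rw [← Fintype.card_subtype]
      exact (card_congr_refl _ _).trans
        (IH (fun i hi => hn i (by rw [Finset.mem_Icc] at *; omega))
          (fun i hi => hdvd i (by rw [Finset.mem_Icc] at *; omega))
          (fun i hi => hsize i (by rw [Finset.mem_Icc] at *; omega))
          v' j k hjk hrr)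
    rw [hcount]
    rw [Finset.prod_Icc_succ_top (by omega : 2 ≤ r + 1)]
    simp only [Nat.add_sub_cancel]
    rw [mul_assoc]


/-- **Second Way**, number of outcomes in which two fixed distinct balls `j ≠ k` both
receive the fixed label `v`: it equals
`((N-2)!/((N/n_1-2)!((N/n_1)!)^{n_1-1})) ⬝
 ∏_{i=2}^r ((N/n_{i-1}-2)!/((N/(n_{i-1}n_i)-2)!((N/(n_{i-1}n_i))!)^{n_i-1})) ⬝
           [(N/n_{i-1})!/((N/(n_{i-1}n_i))!)^{n_i}]^{n_{i-1}-1}`. -/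
theorem secondWay_card_two_balls (r : ℕ) (hr : 1 ≤ r) (n : ℕ → ℕ)
    (hn : ∀ i ∈ Finset.Icc 1 r, 0 < n i)
    (N : ℕ) (hN : 0 < N) (hdvd1 : n 1 ∣ N)
    (hdvd : ∀ i ∈ Finset.Icc 2 r, n (i - 1) * n i ∣ N)
    (hsize1 : 2 ≤ N / n 1)
    (hsize : ∀ i ∈ Finset.Icc 2 r, 2 ≤ N / (n (i - 1) * n i))
    (v : ∀ i : Fin r, Fin (n (i.val + 1))) (j k : Fin N) (hjk : j ≠ k) :
    Fintype.card {f : ∀ i : Fin r, Fin N → Fin (n (i.val + 1)) //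
        ((∀ a : Fin (n 1),
          (Finset.univ.filter fun m => f ⟨0, hr⟩ m = a).card = N / n 1) ∧
        (∀ i : Fin r, 1 ≤ i.val →
          ∀ (a : Fin (n (i.val - 1 + 1))) (b : Fin (n (i.val + 1))),
            (Finset.univ.filter fun m =>
                f ⟨i.val - 1, lt_of_le_of_lt (Nat.sub_le _ _) i.isLt⟩ m = a ∧
                  f i m = b).card = N / (n i.val * n (i.val + 1)))) ∧
        (∀ i : Fin r, f i j = v i ∧ f i k = v i)} =
      ((N - 2).factorial /
          ((N / n 1 - 2).factorial * (N / n 1).factorial ^ (n 1 - 1))) *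
        ∏ i ∈ Finset.Icc 2 r,
          ((N / n (i - 1) - 2).factorial /
              ((N / (n (i - 1) * n i) - 2).factorial *
                (N / (n (i - 1) * n i)).factorial ^ (n i - 1))) *
            ((N / n (i - 1)).factorial /
                (N / (n (i - 1) * n i)).factorial ^ n i) ^ (n (i - 1) - 1) := by
  exact (card_congr_refl _ _).trans
    (secondWay_aux n N hdvd1 hsize1 r hr hn hdvd hsize v j k hjk hr)
end

section
/- Let r ≥ 1 and let n_1, …, n_r be positive integers, and let N ≥ 2 be divisible by n_1 and by n_{i−1}·n_i for each 2 ≤ i ≤ r, with N/n_1 ≥ 2 and N/(n_{i−1} n_i) ≥ 2 for all 2 ≤ i ≤ r. Let T be the set of tuples f = (f_1, …, f_r), f_i : Fin N → Fin n_i, such that every fiber of f_1 has exactly N/n_1 elements, and for each 2 ≤ i ≤ r and every a ∈ Fin n_{i−1}, b ∈ Fin n_i, the set { j : f_{i−1}(j) = a and f_i(j) = b } has exactly N/(n_{i−1} n_i) elements. Fix a label v and set α(f) = #{ j : f_i(j) = v_i for all i }. Then, as an identity of rational numbers, (1/|T|) · ∑_{f ∈ T} C(α(f), 2) = C(N, 2)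 · (∏_{i=1}^r n_i^{−2}) · ( (N − n_1)/(N − 1) ) · ∏_{i=2}^r (N − n_{i−1} n_i)/(N − n_{i−1}), where C(m,2) = m(m−1)/2. -/
set_option linter.unusedSectionVars false
set_option maxHeartbeats 1600000

open Finset

section generic
variable {D A B : Type*} [Fintype D] [DecidableEq D] [Fintype A] [DecidableEq A]
  [Fintype B] [DecidableEq B]

lemma filter_comp_perm_card (σ : Equiv.Perm D) (p : D → Prop) [DecidablePred p] :
    (univ.filter fun j => p (σ j)).card = (univ.filter p).card := by
  apply Finset.card_bij (fun j _ => σ j)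
  · intro a ha; simp only [mem_filter, mem_univ, true_and] at ha ⊢; exact ha
  · intro a _ b _ h; exact σ.injective h
  · intro b hb
    refine ⟨σ.symm b, ?_, by simp⟩
    simp only [mem_filter, mem_univ, true_and] at hb ⊢
    simpa using hb

lemma cell_comp (φ φ' : D → A) (σ : Equiv.Perm D) (hσ : ∀ j, φ (σ j) = φ' j)
    (g : D → B) (a : A) (b : B) :
    (univ.filter fun j => φ' j = a ∧ g (σ j) = b).card
      = (univ.filter fun j => φ j = a ∧ g j = b).card := by
  have h2 : (univ.filter fun j => φ' j = a ∧ g (σ j) = b)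
      = (univ.filter fun j => φ (σ j) = a ∧ g (σ j) = b) := by
    apply Finset.filter_congr; intro j _; rw [hσ j]
  rw [h2]
  exact filter_comp_perm_card σ (fun k => φ k = a ∧ g k = b)

/-- the finset of functions with all `(φ, g)`-cells of size `m`. -/
def EF (φ : D → A) (m : ℕ) : Finset (D → B) :=
  univ.filter fun g => ∀ a b, (univ.filter fun j => φ j = a ∧ g j = b).card = m

lemma mem_EF {φ : D → A} {m : ℕ} {g : D → B} :
    g ∈ EF φ m ↔ ∀ a b, (univ.filter fun j => φ j = a ∧ g j = b).card = m := by
  simp [EF]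

lemma comp_mem_EF {φ φ' : D → A} {m : ℕ} {g : D → B} (σ : Equiv.Perm D)
    (hσ : ∀ j, φ (σ j) = φ' j) (hg : g ∈ EF φ m) : (g ∘ σ) ∈ EF φ' m := by
  rw [mem_EF] at hg ⊢
  intro a b
  rw [show (univ.filter fun j => φ' j = a ∧ (g ∘ σ) j = b)
      = univ.filter fun j => φ' j = a ∧ g (σ j) = b from rfl,
    cell_comp φ φ' σ hσ g a b]
  exact hg a b

lemma EF_card_congr (φ φ' : D → A) (m : ℕ)
    (h : ∀ a, (univ.filter fun j => φ j = a).card = (univ.filter fun j => φ' j = a).card) :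
    (EF φ m : Finset (D → B)).card = (EF φ' m : Finset (D → B)).card := by
  have e : ∀ c, {j // φ' j = c} ≃ {j // φ j = c} := fun c =>
    Fintype.equivOfCardEq (by rw [Fintype.card_subtype, Fintype.card_subtype]; exact (h c).symm)
  set σ : Equiv.Perm D := Equiv.ofFiberEquiv e with hσdef
  have hσ : ∀ j, φ (σ j) = φ' j := fun j => Equiv.ofFiberEquiv_map e j
  have hσ' : ∀ j, φ' (σ.symm j) = φ j := by
    intro j; have := hσ (σ.symm j); rw [Equiv.apply_symm_apply] at this; exact this.symm
  apply Finset.card_bij' (fun g _ => g ∘ σ) (fun g _ => g ∘ σ.symm)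
  · intro g hg; exact comp_mem_EF σ hσ hg
  · intro g hg; exact comp_mem_EF σ.symm hσ' hg
  · intro g _; funext j; simp
  · intro g _; funext j; simp

lemma phi_swap (φ : D → A) {u w : D} (h : φ u = φ w) (x : D) :
    φ (Equiv.swap u w x) = φ x := by
  rcases eq_or_ne x u with rfl | hxu
  · rw [Equiv.swap_apply_left]; exact h.symm
  rcases eq_or_ne x w with rfl | hxw
  · rw [Equiv.swap_apply_right]; exact h
  rw [Equiv.swap_apply_of_ne_of_ne hxu hxw]

lemma X_const (φ : D → A) (m : ℕ) (a : A) (b : B) {j k j' k' : D}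
    (hj : φ j = a) (hk : φ k = a) (hj' : φ j' = a) (hk' : φ k' = a)
    (hjk : j ≠ k) (hjk' : j' ≠ k') :
    ((EF φ m).filter fun g : D → B => g j = b ∧ g k = b).card
      = ((EF φ m).filter fun g : D → B => g j' = b ∧ g k' = b).card := by
  classical
  set τ : Equiv.Perm D := Equiv.swap j j' with hτ
  set σ : Equiv.Perm D := τ.trans (Equiv.swap k (τ k')) with hσdef
  have hτk' : φ (τ k') = a := by rw [phi_swap φ (hj.trans hj'.symm)]; exact hk'
  have hφσ : ∀ x, φ (σ x) = φ x := by
    intro x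
    show φ (Equiv.swap k (τ k') (τ x)) = φ x
    rw [phi_swap φ (hk.trans hτk'.symm), phi_swap φ (hj.trans hj'.symm)]
  have hσj' : σ j' = j := by
    show Equiv.swap k (τ k') (τ j') = j
    have h1 : τ j' = j := Equiv.swap_apply_right j j'
    rw [h1]
    apply Equiv.swap_apply_of_ne_of_ne hjk
    intro hEq
    have h2 : τ j = τ (τ k') := congrArg τ hEq
    rw [Equiv.swap_apply_left, Equiv.swap_apply_self] at h2
    exact hjk' h2
  have hσk' : σ k' = k := by
    show Equiv.swap k (τ k') (τ k') = k
    exact Equiv.swap_apply_right k (τ k')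
  have hsymmj : σ.symm j = j' := by rw [← hσj', Equiv.symm_apply_apply]
  have hsymmk : σ.symm k = k' := by rw [← hσk', Equiv.symm_apply_apply]
  have hφσ' : ∀ x, φ (σ.symm x) = φ x := by
    intro x
    have := hφσ (σ.symm x)
    rw [Equiv.apply_symm_apply] at this; exact this.symm
  apply Finset.card_bij' (fun g _ => g ∘ σ) (fun g _ => g ∘ σ.symm)
  · intro g hg
    rw [mem_filter] at hg ⊢
    refine ⟨comp_mem_EF σ hφσ hg.1, ?_, ?_⟩
    · show g (σ j') = b; rw [hσj']; exact hg.2.1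
    · show g (σ k') = b; rw [hσk']; exact hg.2.2
  · intro g hg
    rw [mem_filter] at hg ⊢
    refine ⟨comp_mem_EF σ.symm hφσ' hg.1, ?_, ?_⟩
    · show g (σ.symm j) = b; rw [hsymmj]; exact hg.2.1
    · show g (σ.symm k) = b; rw [hsymmk]; exact hg.2.2
  · intro g _; funext x; simp
  · intro g _; funext x; simp

lemma offDiag_filter_eq (G : Finset D) (q : D → Prop) [DecidablePred q] :
    (G.filter q).offDiag = G.offDiag.filter fun p => q p.1 ∧ q p.2 := by
  ext ⟨x, y⟩
  simp only [Finset.mem_offDiag, Finset.mem_filter]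
  tauto

lemma keyCount (φ : D → A) (m M : ℕ) (a : A) (b : B) {j k : D}
    (hF : (univ.filter fun x => φ x = a).card = M)
    (hj : φ j = a) (hk : φ k = a) (hjk : j ≠ k) :
    (M * M - M) * ((EF φ m).filter fun g : D → B => g j = b ∧ g k = b).card
      = (EF φ m : Finset (D → B)).card * (m * m - m) := by
  classical
  set F : Finset D := univ.filter fun x => φ x = a with hFdef
  have key : ∑ p ∈ F.offDiag, ((EF φ m).filter fun g : D → B => g p.1 = b ∧ g p.2 = b).card
      = ∑ g ∈ (EF φ m : Finset (D → B)), (m * m - m) := by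
    have h1 : ∀ p ∈ F.offDiag,
        ((EF φ m).filter fun g : D → B => g p.1 = b ∧ g p.2 = b).card
          = ∑ g ∈ (EF φ m : Finset (D → B)), if g p.1 = b ∧ g p.2 = b then 1 else 0 := by
      intro p _; rw [← Finset.sum_filter, Finset.sum_const, smul_eq_mul, mul_one]
    rw [Finset.sum_congr rfl h1, Finset.sum_comm]
    apply Finset.sum_congr rfl
    intro g hg
    have h2 : ∑ p ∈ F.offDiag, (if g p.1 = b ∧ g p.2 = b then 1 else 0)
        = (F.offDiag.filter fun p => g p.1 = b ∧ g p.2 = b).card := by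
      rw [← Finset.sum_filter, Finset.sum_const, smul_eq_mul, mul_one]
    rw [h2, (offDiag_filter_eq F fun x => g x = b).symm, Finset.offDiag_card]
    have h3 : F.filter (fun x => g x = b) = univ.filter fun x => φ x = a ∧ g x = b := by
      rw [hFdef, Finset.filter_filter]
    rw [h3, (mem_EF.1 hg) a b]
  have h4 : ∀ p ∈ F.offDiag,
      ((EF φ m).filter fun g : D → B => g p.1 = b ∧ g p.2 = b).card
        = ((EF φ m).filter fun g : D → B => g j = b ∧ g k = b).card := by
    intro p hp
    rw [Finset.mem_offDiag] at hp
    obtain ⟨h1, h2, h3⟩ := hp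
    rw [hFdef, mem_filter] at h1 h2
    exact X_const φ m a b h1.2 h2.2 hj hk h3 hjk
  rw [Finset.sum_congr rfl h4, Finset.sum_const, smul_eq_mul, Finset.offDiag_card, hF] at key
  rw [Finset.sum_const, smul_eq_mul] at key
  exact key

lemma sum_pairs (φ : D → A) (m M : ℕ) (a : A) (b : B)
    (hF : (univ.filter fun x => φ x = a).card = M)
    (G : Finset D) (hG : ∀ x ∈ G, φ x = a) :
    (M * M - M) * ∑ g ∈ (EF φ m : Finset (D → B)),
        ((G.filter fun x => g x = b).card * (G.filter fun x => g x = b).card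
          - (G.filter fun x => g x = b).card)
      = (G.card * G.card - G.card) * ((EF φ m : Finset (D → B)).card * (m * m - m)) := by
  classical
  have h1 : ∀ g ∈ (EF φ m : Finset (D → B)),
      (G.filter fun x => g x = b).card * (G.filter fun x => g x = b).card
          - (G.filter fun x => g x = b).card
        = ∑ p ∈ G.offDiag, if g p.1 = b ∧ g p.2 = b then 1 else 0 := by
    intro g _
    rw [← Finset.offDiag_card, offDiag_filter_eq, ← Finset.sum_filter, Finset.sum_const,
      smul_eq_mul, mul_one]
  rw [Finset.sum_congr rfl h1, Finset.sum_comm]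
  have h2 : ∀ p ∈ G.offDiag,
      (∑ g ∈ (EF φ m : Finset (D → B)), if g p.1 = b ∧ g p.2 = b then 1 else 0)
        = ((EF φ m).filter fun g : D → B => g p.1 = b ∧ g p.2 = b).card := by
    intro p _; rw [← Finset.sum_filter, Finset.sum_const, smul_eq_mul, mul_one]
  rw [Finset.sum_congr rfl h2, Finset.mul_sum]
  have h3 : ∀ p ∈ G.offDiag,
      (M * M - M) * ((EF φ m).filter fun g : D → B => g p.1 = b ∧ g p.2 = b).card
        = (EF φ m : Finset (D → B)).card * (m * m - m) := by
    intro p hp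
    rw [Finset.mem_offDiag] at hp
    exact keyCount φ m M a b hF (hG _ hp.1) (hG _ hp.2.1) hp.2.2
  rw [Finset.sum_congr rfl h3, Finset.sum_const, smul_eq_mul, Finset.offDiag_card]

lemma exists_equalFiber (φ : D → A) (m t : ℕ)
    (hfib : ∀ a, (univ.filter fun x => φ x = a).card = m * t) :
    ∃ g : D → Fin t, ∀ a b, (univ.filter fun x => φ x = a ∧ g x = b).card = m := by
  classical
  have hcard : ∀ a, Fintype.card {x // φ x = a} = m * t := fun a => by
    rw [Fintype.card_subtype]; exact hfib a
  have e : ∀ a, {x // φ x = a} ≃ Fin m × Fin t := fun a =>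
    Fintype.equivOfCardEq (by simp [hcard a])
  refine ⟨fun x => (e (φ x) ⟨x, rfl⟩).2, fun a b => ?_⟩
  have key : ∀ (x : D) (h : φ x = a), e (φ x) ⟨x, rfl⟩ = e a ⟨x, h⟩ := by
    intro x h; cases h; rfl
  rw [← Fintype.card_subtype]
  have e2 : {x // φ x = a ∧ (e (φ x) ⟨x, rfl⟩).2 = b} ≃ {y : Fin m × Fin t // y.2 = b} := by
    refine ⟨fun p => ⟨e a ⟨p.1, p.2.1⟩, ?_⟩, fun y => ⟨((e a).symm y.1).1, ((e a).symm y.1).2, ?_⟩,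
      ?_, ?_⟩
    · rw [← key p.1 p.2.1]; exact p.2.2
    · rw [key _ ((e a).symm y.1).2]
      have : (⟨((e a).symm y.1).1, ((e a).symm y.1).2⟩ : {x // φ x = a}) = (e a).symm y.1 :=
        Subtype.ext rfl
      rw [this, Equiv.apply_symm_apply]
      exact y.2
    · intro p
      apply Subtype.ext
      show (((e a).symm (e a ⟨p.1, p.2.1⟩)).1 : D) = p.1
      rw [Equiv.symm_apply_apply]
    · intro y
      apply Subtype.ext
      show (e a ⟨((e a).symm y.1).1, ((e a).symm y.1).2⟩ : Fin m × Fin t) = y.1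
      have : (⟨((e a).symm y.1).1, ((e a).symm y.1).2⟩ : {x // φ x = a}) = (e a).symm y.1 :=
        Subtype.ext rfl
      rw [this, Equiv.apply_symm_apply]
  have e3 : {y : Fin m × Fin t // y.2 = b} ≃ Fin m :=
    ⟨fun y => y.1.1, fun i => ⟨(i, b), rfl⟩,
      fun y => by apply Subtype.ext; exact Prod.ext rfl y.2.symm,
      fun i => rfl⟩
  rw [Fintype.card_congr (e2.trans e3), Fintype.card_fin]

end generic

section harness
variable (N : ℕ) (n : ℕ → ℕ)

def Pr (r : ℕ) (hr : 0 < r) (f : ∀ i : Fin r, Fin N → Fin (n (i.val + 1))) : Prop :=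
  (∀ a : Fin (n 1),
    (Finset.univ.filter fun j => f ⟨0, hr⟩ j = a).card = N / n 1) ∧
  (∀ i : Fin r, 1 ≤ i.val →
    ∀ (a : Fin (n (i.val - 1 + 1))) (b : Fin (n (i.val + 1))),
      (Finset.univ.filter fun j =>
          f ⟨i.val - 1, lt_of_le_of_lt (Nat.sub_le _ _) i.isLt⟩ j = a ∧
            f i j = b).card = N / (n i.val * n (i.val + 1)))

instance PrDec (r : ℕ) (hr : 0 < r) : DecidablePred (Pr N n r hr) := fun f => by
  unfold Pr; infer_instance

def ac (r : ℕ) (v : ∀ i : Fin r, Fin (n (i.val + 1)))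
    (f : ∀ i : Fin r, Fin N → Fin (n (i.val + 1))) : ℕ :=
  (univ.filter fun j : Fin N => ∀ i : Fin r, f i j = v i).card

variable {r : ℕ}

lemma snoc_lt (f' : ∀ i : Fin r, Fin N → Fin (n (i.val + 1)))
    (g : Fin N → Fin (n (r + 1))) (m : ℕ) (hm : m < r) (hm' : m < r + 1) :
    Fin.snoc (α := fun i : Fin (r+1) => Fin N → Fin (n (i.val + 1))) f' g ⟨m, hm'⟩
      = f' ⟨m, hm⟩ :=
  Fin.snoc_castSucc (α := fun i : Fin (r+1) => Fin N → Fin (n (i.val + 1))) g f' ⟨m, hm⟩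

lemma snoc_last' (f' : ∀ i : Fin r, Fin N → Fin (n (i.val + 1)))
    (g : Fin N → Fin (n (r + 1))) (hm' : r < r + 1) :
    Fin.snoc (α := fun i : Fin (r+1) => Fin N → Fin (n (i.val + 1))) f' g ⟨r, hm'⟩ = g :=
  Fin.snoc_last (α := fun i : Fin (r+1) => Fin N → Fin (n (i.val + 1))) g f'

lemma Pr_iff (hr : 0 < r) (f : ∀ i : Fin r, Fin N → Fin (n (i.val + 1))) :
    Pr N n r hr f ↔
      ((∀ a : Fin (n 1),
        (Finset.univ.filter fun j => f ⟨0, hr⟩ j = a).card = N / n 1) ∧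
      (∀ (k : ℕ) (hk1 : 1 ≤ k) (hk : k < r),
        ∀ (a : Fin (n (k - 1 + 1))) (b : Fin (n (k + 1))),
          (Finset.univ.filter fun j =>
              f ⟨k - 1, by omega⟩ j = a ∧ f ⟨k, hk⟩ j = b).card
            = N / (n k * n (k + 1)))) := by
  constructor
  · rintro ⟨h1, h2⟩
    refine ⟨h1, ?_⟩
    intro k hk1 hk a b
    exact h2 ⟨k, hk⟩ hk1 a b
  · rintro ⟨h1, h2⟩
    refine ⟨h1, ?_⟩
    intro i hi a b
    exact h2 i.val hi i.isLt a b

lemma Pr_snoc (hr : 0 < r) (hS : 0 < r + 1) (f' : ∀ i : Fin r, Fin N → Fin (n (i.val + 1)))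
    (g : Fin N → Fin (n (r + 1))) :
    Pr N n (r+1) hS
        (Fin.snoc (α := fun i : Fin (r+1) => Fin N → Fin (n (i.val + 1))) f' g) ↔
      (Pr N n r hr f' ∧ ∀ (a : Fin (n (r - 1 + 1))) (b : Fin (n (r + 1))),
        (univ.filter fun j => f' ⟨r - 1, by omega⟩ j = a ∧ g j = b).card
          = N / (n r * n (r + 1))) := by
  rw [Pr_iff N n hS, Pr_iff N n hr]
  constructor
  · rintro ⟨h1, h2⟩
    refine ⟨⟨?_, ?_⟩, ?_⟩
    · intro a
      have := h1 a
      rwa [snoc_lt N n f' g 0 hr] at this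
    · intro k hk1 hk a b
      have := h2 k hk1 (by omega) a b
      rwa [snoc_lt N n f' g k hk, snoc_lt N n f' g (k-1) (by omega)] at this
    · intro a b
      have := h2 r (by omega) (by omega) a b
      rwa [snoc_last' N n f' g, snoc_lt N n f' g (r-1) (by omega)] at this
  · rintro ⟨⟨h1, h2⟩, h3⟩
    constructor
    · intro a
      rw [snoc_lt N n f' g 0 hr]
      exact h1 a
    · intro k hk1 hk a b
      rcases Nat.lt_or_ge k r with hlt | hge
      · rw [snoc_lt N n f' g k hlt, snoc_lt N n f' g (k-1) (by omega)]
        exact h2 k hk1 hlt a b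
      · have hkr : k = r := by omega
        subst hkr
        rw [snoc_last' N n f' g, snoc_lt N n f' g (k-1) (by omega)]
        exact h3 a b

lemma ac_snoc (v : ∀ i : Fin (r+1), Fin (n (i.val + 1)))
    (f' : ∀ i : Fin r, Fin N → Fin (n (i.val + 1))) (g : Fin N → Fin (n (r + 1))) :
    ac N n (r+1) v (Fin.snoc (α := fun i : Fin (r+1) => Fin N → Fin (n (i.val + 1))) f' g)
      = ((univ.filter fun j : Fin N => ∀ i : Fin r, f' i j = Fin.init v i).filter
          fun j => g j = v (Fin.last r)).card := by
  unfold ac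
  rw [Finset.filter_filter]
  apply congrArg Finset.card
  apply Finset.filter_congr
  intro j _
  rw [Fin.forall_fin_succ']
  constructor
  · rintro ⟨hc, hl⟩
    refine ⟨fun i => ?_, ?_⟩
    · have := hc i
      rwa [Fin.snoc_castSucc] at this
    · rwa [Fin.snoc_last] at hl
  · rintro ⟨hc, hl⟩
    refine ⟨fun i => ?_, ?_⟩
    · rw [Fin.snoc_castSucc]
      exact hc i
    · rwa [Fin.snoc_last]

def sEquiv : ((∀ i : Fin r, Fin N → Fin (n (i.val + 1))) × (Fin N → Fin (n (r + 1))))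
    ≃ (∀ i : Fin (r+1), Fin N → Fin (n (i.val + 1))) where
  toFun p := Fin.snoc (α := fun i : Fin (r+1) => Fin N → Fin (n (i.val + 1))) p.1 p.2
  invFun f := (fun i => f i.castSucc, f (Fin.last r))
  left_inv p := by
    refine Prod.ext ?_ ?_
    · funext i
      exact Fin.snoc_castSucc (α := fun i : Fin (r+1) => Fin N → Fin (n (i.val + 1))) p.2 p.1 i
    · exact Fin.snoc_last (α := fun i : Fin (r+1) => Fin N → Fin (n (i.val + 1))) p.2 p.1
  right_inv f := Fin.snoc_init_self f

lemma sum_snoc_decomp (hr : 0 < r) (hS : 0 < r + 1)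
    (F : (∀ i : Fin (r+1), Fin N → Fin (n (i.val + 1))) → ℕ) :
    ∑ f ∈ univ.filter (Pr N n (r+1) hS), F f
      = ∑ f' ∈ univ.filter (Pr N n r hr),
          ∑ g ∈ (EF (f' ⟨r - 1, by omega⟩) (N / (n r * n (r + 1)))
              : Finset (Fin N → Fin (n (r + 1)))),
            F (Fin.snoc (α := fun i : Fin (r+1) => Fin N → Fin (n (i.val + 1))) f' g) := by
  rw [Finset.sum_filter]
  rw [← Equiv.sum_comp (sEquiv N n (r := r))
    (fun f => if Pr N n (r+1) hS f then F f else 0)]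
  rw [Fintype.sum_prod_type]
  simp only [show ∀ p, sEquiv N n (r := r) p = Fin.snoc (α := fun i : Fin (r+1) => Fin N → Fin (n (i.val + 1))) p.1 p.2 from fun _ => rfl]
  rw [Finset.sum_filter]
  apply Finset.sum_congr rfl
  intro f' _
  by_cases hP : Pr N n r hr f'
  · simp only [hP, if_true]
    simp only [EF]
    rw [Finset.sum_filter]
    apply Finset.sum_congr rfl
    intro g _
    rw [if_congr (Pr_snoc N n hr hS f' g) rfl rfl, ite_and, if_pos hP]
    congr 1
  · simp only [hP, if_false]
    apply Finset.sum_eq_zero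
    intro g _
    rw [if_congr (Pr_snoc N n hr hS f' g) rfl rfl, ite_and, if_neg hP]


/-- all fibers of the last component have size `N / n r`. -/
lemma fiber_card (r : ℕ) (hr : 0 < r) (hn : ∀ i ∈ Finset.Icc 1 r, 0 < n i)
    (hdvd : ∀ i ∈ Finset.Icc 2 r, n (i - 1) * n i ∣ N)
    (f : ∀ i : Fin r, Fin N → Fin (n (i.val + 1))) (hf : Pr N n r hr f)
    (a : Fin (n (r - 1 + 1))) :
    (univ.filter fun j => f ⟨r - 1, by omega⟩ j = a).card = N / n r := by
  rcases Nat.lt_or_ge r 2 with h2 | h2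
  · have hr1 : r = 1 := by omega
    subst hr1
    exact hf.1 a
  · -- r ≥ 2
    set i : Fin r := ⟨r - 1, by omega⟩ with hidef
    have hi1 : 1 ≤ i.val := by simp [hidef]; omega
    have hkey := hf.2 i hi1
    -- partition the fiber of `f i` over `a` by the value of `f ⟨r-2,_⟩`
    have hsplit : (univ.filter fun j => f i j = a).card
        = ∑ c : Fin (n (i.val - 1 + 1)),
            ((univ.filter fun j => f i j = a).filter
              (fun j => f ⟨i.val - 1, lt_of_le_of_lt (Nat.sub_le _ _) i.isLt⟩ j = c)).card := by
      exact Finset.card_eq_sum_card_fiberwise (fun x _ => Finset.mem_univ _)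
    have hterm : ∀ c : Fin (n (i.val - 1 + 1)),
        ((univ.filter fun j => f i j = a).filter
          (fun j => f ⟨i.val - 1, lt_of_le_of_lt (Nat.sub_le _ _) i.isLt⟩ j = c)).card
        = N / (n i.val * n (i.val + 1)) := by
      intro c
      rw [Finset.filter_filter]
      refine Eq.trans (congrArg Finset.card (Finset.filter_congr fun j _ => ?_)) (hkey c a)
      exact and_comm
    rw [hsplit, Finset.sum_congr rfl (fun c _ => hterm c), Finset.sum_const, smul_eq_mul,
      Finset.card_univ, Fintype.card_fin]
    -- arithmetic: n (i.val - 1 + 1) * (N / (n i.val * n (i.val+1))) = N / n r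
    have hival : i.val = r - 1 := rfl
    have e1 : i.val - 1 + 1 = r - 1 := by omega
    have e2 : i.val + 1 = r := by omega
    have e3 : i.val = r - 1 := rfl
    rw [e1, e2, e3]
    obtain ⟨k, hk⟩ := hdvd r (by simp only [Finset.mem_Icc]; omega)
    have hn1 : 0 < n (r - 1) := hn _ (by simp only [Finset.mem_Icc]; omega)
    have hn2 : 0 < n r := hn _ (by simp only [Finset.mem_Icc]; omega)
    rw [hk]
    rw [Nat.mul_div_cancel_left k (by positivity)]
    rw [show n (r - 1) * n r * k = n r * (n (r - 1) * k) by ring]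
    rw [Nat.mul_div_cancel_left _ hn2]


end harness

open Finset

lemma choose2_cast (a : ℕ) : ((a.choose 2 : ℕ) : ℚ) = ((a * a - a : ℕ) : ℚ) / 2 := by
  rw [Nat.cast_choose_two]
  rcases Nat.eq_zero_or_pos a with rfl | ha
  · simp
  · have h1 : a ≤ a * a := Nat.le_mul_of_pos_left a ha
    rw [Nat.cast_sub h1]
    push_cast
    ring


lemma step_lemma (N : ℕ) (n : ℕ → ℕ) (r : ℕ) (hr : 1 ≤ r) (hS : 0 < r + 1)
    (hn : ∀ i ∈ Finset.Icc 1 (r+1), 0 < n i)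
    (hN : 2 ≤ N)
    (hdvd : ∀ i ∈ Finset.Icc 2 (r+1), n (i - 1) * n i ∣ N)
    (hsize : ∀ i ∈ Finset.Icc 2 (r+1), 2 ≤ N / (n (i - 1) * n i))
    (hposR : 0 < (univ.filter (Pr N n r hr)).card)
    (hsumR : ∀ v : ∀ i : Fin r, Fin (n (i.val + 1)),
      ((∑ f ∈ univ.filter (Pr N n r hr),
          (ac N n r v f * ac N n r v f - ac N n r v f) : ℕ) : ℚ)
        = ((N : ℚ) * N - N) * (∏ i ∈ Icc 1 r, ((n i : ℚ) ^ 2)⁻¹) *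
            (((N : ℚ) - n 1) / ((N : ℚ) - 1)) *
            (∏ i ∈ Icc 2 r, (((N : ℚ) - n (i - 1) * n i) / ((N : ℚ) - n (i - 1)))) *
            (univ.filter (Pr N n r hr)).card) :
    0 < (univ.filter (Pr N n (r+1) hS)).card ∧
    ∀ v : ∀ i : Fin (r+1), Fin (n (i.val + 1)),
      ((∑ f ∈ univ.filter (Pr N n (r+1) hS),
          (ac N n (r+1) v f * ac N n (r+1) v f - ac N n (r+1) v f) : ℕ) : ℚ)
        = ((N : ℚ) * N - N) * (∏ i ∈ Icc 1 (r+1), ((n i : ℚ) ^ 2)⁻¹) *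
            (((N : ℚ) - n 1) / ((N : ℚ) - 1)) *
            (∏ i ∈ Icc 2 (r+1), (((N : ℚ) - n (i - 1) * n i) / ((N : ℚ) - n (i - 1)))) *
            (univ.filter (Pr N n (r+1) hS)).card := by
  have hd : n r * n (r + 1) ∣ N := by
    have h := hdvd (r+1) (by simp only [Finset.mem_Icc]; omega)
    simpa using h
  have hm2 : 2 ≤ N / (n r * n (r + 1)) := by
    have h := hsize (r+1) (by simp only [Finset.mem_Icc]; omega)
    simpa using h
  have hnr : 0 < n r := hn r (by simp only [Finset.mem_Icc]; omega)
  have hnr1 : 0 < n (r+1) := hn (r+1) (by simp only [Finset.mem_Icc]; omega)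
  have hnrN : n r ∣ N := dvd_trans (dvd_mul_right _ _) hd
  have hMm : N / n r = N / (n r * n (r + 1)) * n (r + 1) := by
    obtain ⟨k, hk⟩ := hd
    rw [hk, Nat.mul_div_cancel_left k (by positivity),
      show n r * n (r + 1) * k = n r * (n (r + 1) * k) from by ring,
      Nat.mul_div_cancel_left _ hnr, mul_comm]
  have hM2 : 2 ≤ N / n r := by
    rw [hMm]
    exact le_trans hm2 (Nat.le_mul_of_pos_right _ hnr1)
  have hfib : ∀ f' ∈ univ.filter (Pr N n r hr), ∀ a : Fin (n (r - 1 + 1)),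
      (univ.filter fun j => f' ⟨r - 1, by omega⟩ j = a).card = N / n r := by
    intro f' hf' a
    exact fiber_card N n r hr (fun i hi => hn i (by simp at hi ⊢; omega))
      (fun i hi => hdvd i (by simp at hi ⊢; omega)) f' (Finset.mem_filter.1 hf').2 a
  obtain ⟨f₀, hf₀⟩ := Finset.card_pos.1 hposR
  obtain ⟨c, hcdef⟩ : ∃ c : ℕ, (EF (f₀ ⟨r - 1, by omega⟩) (N / (n r * n (r + 1)))
      : Finset (Fin N → Fin (n (r + 1)))).card = c := ⟨_, rfl⟩
  have hc : ∀ f' ∈ univ.filter (Pr N n r hr),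
      (EF (f' ⟨r - 1, by omega⟩) (N / (n r * n (r + 1)))
        : Finset (Fin N → Fin (n (r + 1)))).card = c := by
    intro f' hf'
    rw [← hcdef]
    apply EF_card_congr (B := Fin (n (r + 1))) (f' ⟨r - 1, by omega⟩) (f₀ ⟨r - 1, by omega⟩)
      (N / (n r * n (r + 1)))
    intro a
    rw [hfib f' hf' a, hfib f₀ hf₀ a]
  have hcpos : 0 < c := by
    obtain ⟨g, hg⟩ := exists_equalFiber (f₀ ⟨r - 1, by omega⟩)
      (N / (n r * n (r + 1))) (n (r + 1))
      (fun a => by rw [hfib f₀ hf₀ a, hMm])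
    rw [← hcdef]
    exact Finset.card_pos.2 ⟨g, mem_EF.2 hg⟩
  have hcard : (univ.filter (Pr N n (r+1) hS)).card
      = c * (univ.filter (Pr N n r hr)).card := by
    calc (univ.filter (Pr N n (r+1) hS)).card
        = ∑ f ∈ univ.filter (Pr N n (r+1) hS), 1 := Finset.card_eq_sum_ones _
      _ = ∑ f' ∈ univ.filter (Pr N n r hr),
            ∑ g ∈ (EF (f' ⟨r - 1, by omega⟩) (N / (n r * n (r + 1)))
                : Finset (Fin N → Fin (n (r + 1)))), 1 :=
          sum_snoc_decomp N n hr hS (fun _ => 1)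
      _ = ∑ f' ∈ univ.filter (Pr N n r hr), c := by
          refine Finset.sum_congr rfl (fun f' hf' => ?_)
          rw [← Finset.card_eq_sum_ones]
          exact hc f' hf'
      _ = (univ.filter (Pr N n r hr)).card * c := by
          rw [Finset.sum_const, smul_eq_mul]
      _ = c * (univ.filter (Pr N n r hr)).card := mul_comm _ _
  refine ⟨by rw [hcard]; exact Nat.mul_pos hcpos hposR, ?_⟩
  intro v
  have hstep : (N / n r * (N / n r) - N / n r) *
      (∑ f ∈ univ.filter (Pr N n (r+1) hS),
        (ac N n (r+1) v f * ac N n (r+1) v f - ac N n (r+1) v f))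
      = (c * (N / (n r * n (r + 1)) * (N / (n r * n (r + 1))) - N / (n r * n (r + 1)))) *
        (∑ f' ∈ univ.filter (Pr N n r hr),
          (ac N n r (Fin.init v) f' * ac N n r (Fin.init v) f' - ac N n r (Fin.init v) f')) := by
    rw [sum_snoc_decomp N n hr hS
      (fun f => ac N n (r+1) v f * ac N n (r+1) v f - ac N n (r+1) v f)]
    rw [Finset.mul_sum, Finset.mul_sum]
    refine Finset.sum_congr rfl (fun f' hf' => ?_)
    rw [Finset.sum_congr rfl (fun g _ => by rw [ac_snoc N n v f' g])]
    have hsp := sum_pairs (f' ⟨r - 1, by omega⟩) (N / (n r * n (r + 1))) (N / n r)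
      (Fin.init v ⟨r - 1, by omega⟩) (v (Fin.last r))
      (hfib f' hf' _)
      (univ.filter fun j : Fin N => ∀ i : Fin r, f' i j = Fin.init v i)
      (fun j hj => (Finset.mem_filter.1 hj).2 ⟨r - 1, by omega⟩)
    refine hsp.trans ?_
    rw [hc f' hf']
    show _ = (c * _) * (ac N n r (Fin.init v) f' * ac N n r (Fin.init v) f'
      - ac N n r (Fin.init v) f')
    rw [show ac N n r (Fin.init v) f'
        = (univ.filter fun j : Fin N => ∀ i : Fin r, f' i j = Fin.init v i).card from rfl]
    ring
  -- cast everything to ℚ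
  have hstepQ : ((N / n r * (N / n r) - N / n r : ℕ) : ℚ) *
      ((∑ f ∈ univ.filter (Pr N n (r+1) hS),
        (ac N n (r+1) v f * ac N n (r+1) v f - ac N n (r+1) v f) : ℕ) : ℚ)
      = (c : ℚ) * ((N / (n r * n (r + 1)) * (N / (n r * n (r + 1)))
            - N / (n r * n (r + 1)) : ℕ) : ℚ) *
        ((∑ f' ∈ univ.filter (Pr N n r hr),
          (ac N n r (Fin.init v) f' * ac N n r (Fin.init v) f'
            - ac N n r (Fin.init v) f') : ℕ) : ℚ) := by
    rw [← Nat.cast_mul, ← Nat.cast_mul, ← Nat.cast_mul, hstep]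
  have hMMpos : 0 < N / n r * (N / n r) - N / n r := by
    have h2 := Nat.mul_le_mul_right (N / n r) hM2
    omega
  have hMMne : ((N / n r * (N / n r) - N / n r : ℕ) : ℚ) ≠ 0 := by
    exact_mod_cast hMMpos.ne'
  -- the key rational identity
  have hNrlt : n r < N := by
    have h2 := Nat.mul_le_mul_left (n r) hM2
    have h3 : N = n r * (N / n r) := (Nat.mul_div_cancel' hnrN).symm
    omega
  have hNe1 : (N : ℚ) - n r ≠ 0 := by
    have : (n r : ℚ) < N := by exact_mod_cast hNrlt
    intro h; nlinarith
  have hnr1Q : ((n (r+1) : ℚ)) ≠ 0 := by positivity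
  have hNQ : (N : ℚ) = (n r : ℚ) * (n (r+1) : ℚ) * ((N / (n r * n (r + 1)) : ℕ) : ℚ) := by
    have h := (Nat.mul_div_cancel' hd).symm
    exact_mod_cast h
  have hMmQ : ((N / n r : ℕ) : ℚ) = ((N / (n r * n (r + 1)) : ℕ) : ℚ) * (n (r+1) : ℚ) := by
    exact_mod_cast hMm
  have hQ : ((n (r+1) : ℚ) ^ 2)⁻¹ *
        (((N : ℚ) - n (r + 1 - 1) * n (r + 1)) / ((N : ℚ) - n (r + 1 - 1))) *
        ((N / n r * (N / n r) - N / n r : ℕ) : ℚ)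
      = ((N / (n r * n (r + 1)) * (N / (n r * n (r + 1)))
          - N / (n r * n (r + 1)) : ℕ) : ℚ) := by
    have e1 : r + 1 - 1 = r := by omega
    rw [e1]
    rw [Nat.cast_sub (Nat.le_mul_of_pos_left _ (by omega)),
      Nat.cast_sub (Nat.le_mul_of_pos_left _ (by omega))]
    rw [Nat.cast_mul, Nat.cast_mul]
    rw [hMmQ]
    field_simp
    rw [hNQ]
    ring
  -- assemble
  rw [Finset.prod_Icc_succ_top (by omega : 1 ≤ r + 1),
    Finset.prod_Icc_succ_top (by omega : 2 ≤ r + 1)]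
  have hcardQ : ((univ.filter (Pr N n (r+1) hS)).card : ℚ)
      = (c : ℚ) * ((univ.filter (Pr N n r hr)).card : ℚ) := by exact_mod_cast hcard
  apply mul_left_cancel₀ hMMne
  rw [hstepQ, hsumR (Fin.init v), hcardQ, ← hQ]
  ring

lemma main_lemma (N : ℕ) (n : ℕ → ℕ) :
    ∀ (r : ℕ) (hr : 1 ≤ r), (∀ i ∈ Finset.Icc 1 r, 0 < n i) →
    2 ≤ N → n 1 ∣ N →
    (∀ i ∈ Finset.Icc 2 r, n (i - 1) * n i ∣ N) →
    2 ≤ N / n 1 →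
    (∀ i ∈ Finset.Icc 2 r, 2 ≤ N / (n (i - 1) * n i)) →
    0 < (univ.filter (Pr N n r hr)).card ∧
    ∀ v : ∀ i : Fin r, Fin (n (i.val + 1)),
      ((∑ f ∈ univ.filter (Pr N n r hr),
          (ac N n r v f * ac N n r v f - ac N n r v f) : ℕ) : ℚ)
        = ((N : ℚ) * N - N) * (∏ i ∈ Icc 1 r, ((n i : ℚ) ^ 2)⁻¹) *
            (((N : ℚ) - n 1) / ((N : ℚ) - 1)) *
            (∏ i ∈ Icc 2 r, (((N : ℚ) - n (i - 1) * n i) / ((N : ℚ) - n (i - 1)))) *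
            (univ.filter (Pr N n r hr)).card := by
  intro r hr
  induction r, hr using Nat.le_induction with
  | base =>
    intro hn hN hdvd1 hdvd hsize1 hsize
    have hn1 : 0 < n 1 := hn 1 (by simp)
    -- nonemptiness
    obtain ⟨g, hg⟩ := exists_equalFiber (D := Fin N) (φ := fun _ : Fin N => (0 : Fin 1))
      (N / n 1) (n 1) (fun a => by
        have h0 : (univ.filter fun x : Fin N => (0 : Fin 1) = a) = univ := by
          apply Finset.filter_true_of_mem
          intro x _
          exact Subsingleton.elim _ _
        rw [h0, Finset.card_univ, Fintype.card_fin]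
        exact (Nat.div_mul_cancel hdvd1).symm)
    set f0 : ∀ i : Fin 1, Fin N → Fin (n (i.val + 1)) :=
      Fin.cons (α := fun i : Fin 1 => Fin N → Fin (n (i.val + 1))) g (fun i => i.elim0) with hf0
    have hf0P : Pr N n 1 Nat.one_pos f0 := by
      rw [Pr_iff]
      constructor
      · intro a
        have h1 := hg 0 a
        rw [← h1]
        apply congrArg Finset.card
        apply Finset.filter_congr
        intro j _
        simp only [eq_iff_iff]
        constructor
        · intro h; exact ⟨by trivial, h⟩
        · intro h; exact h.2
      · intro k hk1 hk
        omega
    have hpos : 0 < (univ.filter (Pr N n 1 Nat.one_pos)).card := by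
      apply Finset.card_pos.2
      exact ⟨f0, Finset.mem_filter.2 ⟨Finset.mem_univ _, hf0P⟩⟩
    refine ⟨hpos, ?_⟩
    intro v
    have hac : ∀ f ∈ univ.filter (Pr N n 1 Nat.one_pos), ac N n 1 v f = N / n 1 := by
      intro f hf
      rw [Finset.mem_filter] at hf
      have h1 := hf.2.1 (v ⟨0, Nat.one_pos⟩)
      rw [← h1]
      apply congrArg Finset.card
      apply Finset.filter_congr
      intro j _
      simp only [eq_iff_iff]
      constructor
      · intro h; exact h ⟨0, Nat.one_pos⟩
      · intro h i
        have hi : i = ⟨0, Nat.one_pos⟩ := Subsingleton.elim _ _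
        rw [hi]; exact h
    rw [Finset.sum_congr rfl (fun f hf => by rw [hac f hf])]
    rw [Finset.sum_const, smul_eq_mul]
    rw [Finset.Icc_self, Finset.prod_singleton]
    rw [Finset.Icc_eq_empty (by omega), Finset.prod_empty, mul_one]
    have hposM : 0 < N / n 1 := by omega
    rw [Nat.cast_mul, Nat.cast_sub (Nat.le_mul_of_pos_left (N / n 1) hposM)]
    have hM12 : (2 : ℚ) ≤ ((N / n 1 : ℕ) : ℚ) := by exact_mod_cast hsize1
    have hn1Q : (0 : ℚ) < (n 1 : ℚ) := by exact_mod_cast hn1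
    have hNQ : (N : ℚ) = (n 1 : ℚ) * ((N / n 1 : ℕ) : ℚ) := by
      exact_mod_cast (Nat.mul_div_cancel' hdvd1).symm
    have hN1 : ((N : ℚ) - 1) ≠ 0 := by
      have h2 : (2 : ℚ) ≤ (N : ℚ) := by exact_mod_cast hN
      intro h; nlinarith
    field_simp
    rw [hNQ]
    push_cast
    ring
  | succ r hr IH =>
    intro hn hN hdvd1 hdvd hsize1 hsize
    obtain ⟨hposR, hsumR⟩ := IH (fun i hi => hn i (by simp at hi ⊢; omega)) hN hdvd1
      (fun i hi => hdvd i (by simp at hi ⊢; omega)) hsize1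
      (fun i hi => hsize i (by simp at hi ⊢; omega))
    exact step_lemma N n r hr (by omega) hn hN hdvd hsize hposR hsumR

/-- **Second Way**, the quantity `W(α) = (1/|T|) ∑_{f∈T} C(α(f),2)` equals
`C(N,2) (∏_{i=1}^r n_i⁻²) ((N-n_1)/(N-1)) ∏_{i=2}^r (N-n_{i-1}n_i)/(N-n_{i-1})`,
as rational numbers. -/
theorem secondWay_W (r : ℕ) (hr : 1 ≤ r) (n : ℕ → ℕ)
    (hn : ∀ i ∈ Finset.Icc 1 r, 0 < n i)
    (N : ℕ) (hN : 2 ≤ N) (hdvd1 : n 1 ∣ N)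
    (hdvd : ∀ i ∈ Finset.Icc 2 r, n (i - 1) * n i ∣ N)
    (hsize1 : 2 ≤ N / n 1)
    (hsize : ∀ i ∈ Finset.Icc 2 r, 2 ≤ N / (n (i - 1) * n i))
    (v : ∀ i : Fin r, Fin (n (i.val + 1))) :
    (1 : ℚ) / (Fintype.card {f : ∀ i : Fin r, Fin N → Fin (n (i.val + 1)) //
          (∀ a : Fin (n 1),
            (Finset.univ.filter fun j => f ⟨0, hr⟩ j = a).card = N / n 1) ∧
          (∀ i : Fin r, 1 ≤ i.val →
            ∀ (a : Fin (n (i.val - 1 + 1))) (b : Fin (n (i.val + 1))),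
              (Finset.univ.filter fun j =>
                  f ⟨i.val - 1, lt_of_le_of_lt (Nat.sub_le _ _) i.isLt⟩ j = a ∧
                    f i j = b).card = N / (n i.val * n (i.val + 1)))} : ℚ) *
        (∑ f : {f : ∀ i : Fin r, Fin N → Fin (n (i.val + 1)) //
            (∀ a : Fin (n 1),
              (Finset.univ.filter fun j => f ⟨0, hr⟩ j = a).card = N / n 1) ∧
            (∀ i : Fin r, 1 ≤ i.val →
              ∀ (a : Fin (n (i.val - 1 + 1))) (b : Fin (n (i.val + 1))),
                (Finset.univ.filter fun j =>
                    f ⟨i.val - 1, lt_of_le_of_lt (Nat.sub_le _ _) i.isLt⟩ j = a ∧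
                      f i j = b).card = N / (n i.val * n (i.val + 1)))},
          (((Finset.univ.filter fun j : Fin N => ∀ i : Fin r, f.1 i j = v i).card).choose 2
            : ℚ)) =
      (N.choose 2 : ℚ) * (∏ i ∈ Finset.Icc 1 r, ((n i : ℚ) ^ 2)⁻¹) *
        (((N : ℚ) - (n 1 : ℚ)) / ((N : ℚ) - 1)) *
        ∏ i ∈ Finset.Icc 2 r,
          ((N : ℚ) - (n (i - 1) : ℚ) * (n i : ℚ)) / ((N : ℚ) - (n (i - 1) : ℚ)) := by
  obtain ⟨hpos, hsum⟩ := main_lemma N n r hr hn hN hdvd1 hdvd hsize1 hsize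
  have hcT : Fintype.card {f : ∀ i : Fin r, Fin N → Fin (n (i.val + 1)) //
          (∀ a : Fin (n 1),
            (Finset.univ.filter fun j => f ⟨0, hr⟩ j = a).card = N / n 1) ∧
          (∀ i : Fin r, 1 ≤ i.val →
            ∀ (a : Fin (n (i.val - 1 + 1))) (b : Fin (n (i.val + 1))),
              (Finset.univ.filter fun j =>
                  f ⟨i.val - 1, lt_of_le_of_lt (Nat.sub_le _ _) i.isLt⟩ j = a ∧
                    f i j = b).card = N / (n i.val * n (i.val + 1)))}
      = (univ.filter (Pr N n r hr)).card :=
    (Fintype.card_congr (Equiv.refl _)).trans (Fintype.card_subtype _)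
  have hsumEq : (∑ f : {f : ∀ i : Fin r, Fin N → Fin (n (i.val + 1)) //
            (∀ a : Fin (n 1),
              (Finset.univ.filter fun j => f ⟨0, hr⟩ j = a).card = N / n 1) ∧
            (∀ i : Fin r, 1 ≤ i.val →
              ∀ (a : Fin (n (i.val - 1 + 1))) (b : Fin (n (i.val + 1))),
                (Finset.univ.filter fun j =>
                    f ⟨i.val - 1, lt_of_le_of_lt (Nat.sub_le _ _) i.isLt⟩ j = a ∧
                      f i j = b).card = N / (n i.val * n (i.val + 1)))},
          (((Finset.univ.filter fun j : Fin N => ∀ i : Fin r, f.1 i j = v i).card).choose 2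
            : ℚ))
      = ∑ f : {f : ∀ i : Fin r, Fin N → Fin (n (i.val + 1)) // Pr N n r hr f},
          (((Finset.univ.filter fun j : Fin N => ∀ i : Fin r, f.1 i j = v i).card).choose 2
            : ℚ) :=
    Fintype.sum_equiv (Equiv.refl _) _ _ (fun x => rfl)
  have hsumEq2 : (∑ f : {f : ∀ i : Fin r, Fin N → Fin (n (i.val + 1)) // Pr N n r hr f},
          (((Finset.univ.filter fun j : Fin N => ∀ i : Fin r, f.1 i j = v i).card).choose 2
            : ℚ))
      = ∑ f ∈ univ.filter (Pr N n r hr),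
          (((Finset.univ.filter fun j : Fin N => ∀ i : Fin r, f i j = v i).card).choose 2
            : ℚ) := by
    refine (Finset.sum_subtype (univ.filter (Pr N n r hr)) (fun x => ?_)
      (fun f => (((Finset.univ.filter fun j : Fin N =>
        ∀ i : Fin r, f i j = v i).card).choose 2 : ℚ))).symm
    rw [Finset.mem_filter]
    exact ⟨fun h => h.2, fun h => ⟨Finset.mem_univ _, h⟩⟩
  rw [hcT, hsumEq, hsumEq2]
  rw [Finset.sum_congr rfl (fun f _ => choose2_cast _), ← Finset.sum_div]
  rw [← Nat.cast_sum]
  have hSig : (∑ f ∈ univ.filter (Pr N n r hr),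
      ((Finset.univ.filter fun j : Fin N => ∀ i : Fin r, f i j = v i).card *
        (Finset.univ.filter fun j : Fin N => ∀ i : Fin r, f i j = v i).card -
        (Finset.univ.filter fun j : Fin N => ∀ i : Fin r, f i j = v i).card))
      = ∑ f ∈ univ.filter (Pr N n r hr),
          (ac N n r v f * ac N n r v f - ac N n r v f) := rfl
  rw [hSig]
  rw [hsum v]
  have hN0 : 0 < N := Nat.lt_of_lt_of_le Nat.zero_lt_two hN
  have hNleN : N ≤ N * N := Nat.le_mul_of_pos_left N hN0
  rw [choose2_cast N]
  rw [Nat.cast_sub hNleN]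
  rw [Nat.cast_mul]
  have hcne : ((univ.filter (Pr N n r hr)).card : ℚ) ≠ 0 := by
    exact_mod_cast hpos.ne'
  have hN1 : ((N : ℚ) - 1) ≠ 0 := by
    have h2 : (2 : ℚ) ≤ (N : ℚ) := by exact_mod_cast hN
    intro h; nlinarith
  field_simp
end

section
/- Let r ≥ 1 and let n_1, …, n_r be positive integers, and let N ≥ 2 satisfy all divisibility and size conditions for both schemes: N is divisible by each n_i and by each n_{i−1}n_i (2 ≤ i ≤ r), with N/n_i ≥ 2 for all i and N/(n_{i−1}n_i) ≥ 2 for 2 ≤ i ≤ r. Let V₁(N) be the variance of the label-v count α under the First Way, V₁(N) = N/∏ n_i − N²/∏ n_i² + N(N−1) ∏_{i=1}^r (N−n_i)/(n_i²(N−1)), and let V₂(N) be the variance under the Second Way, V₂(N) = N/∏ n_i − N²/∏ n_i² + N(N−1) (∏_{i=1}^r n_i^{−2}) ((N−n_1)/(N−1)) ∏_{i=2}^r (N−n_{i−1}n_i)/(N−n_{i−1}). Then V₂(N) ≤ V₁(N); moreover, for each 2 ≤ i ≤ r the factor inequality (N − n_{i−1} n_i)(N − 1) ≤ (N − n_i)(N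 − n_{i−1}) holds, which is equivalent to (n_{i−1} − 1)(n_i − 1) ≥ 0. -/
/-!
Both closed forms share the terms `N/∏ nᵢ - N²/∏ nᵢ²` and the prefactor
`N(N-1) ∏ nᵢ⁻² (N-n₁)/(N-1)`; they differ only in the factors for `i ≥ 2`, where the
Second Way has `(N - nᵢ₋₁nᵢ)/(N - nᵢ₋₁)` in place of `(N - nᵢ)/(N - 1)`. Cross-multiplying,
`(N - nᵢ)(N - nᵢ₋₁) - (N - nᵢ₋₁nᵢ)(N - 1) = N (nᵢ₋₁ - 1)(nᵢ - 1) ≥ 0`, so the Second Way is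
smaller factor by factor, and the size conditions make every factor nonnegative.
-/

open Finset

section FactorInequality

variable {K : Type*} [Field K] [LinearOrder K] [IsStrictOrderedRing K] {N a b : K}

theorem sub_mul_mul_sub_one_le_iff (hN : 0 < N) :
    (N - a * b) * (N - 1) ≤ (N - b) * (N - a) ↔ 0 ≤ (a - 1) * (b - 1) := by
  rw [← sub_nonneg, show (N - b) * (N - a) - (N - a * b) * (N - 1) = N * ((a - 1) * (b - 1)) by
    ring, mul_nonneg_iff_of_pos_left hN]

theorem sub_mul_div_sub_le_sub_div_sub_one (ha : 1 ≤ a) (hb : 1 ≤ b) (haN : a < N) :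
    (N - a * b) / (N - a) ≤ (N - b) / (N - 1) := by
  rw [div_le_div_iff₀ (by linarith) (by linarith),
    sub_mul_mul_sub_one_le_iff (by linarith)]
  exact mul_nonneg (sub_nonneg.2 ha) (sub_nonneg.2 hb)

theorem prod_sub_mul_div_sub_le_prod_sub_div_sub_one {ι : Type*} {s : Finset ι} {a b : ι → K}
    (ha : ∀ i ∈ s, 1 ≤ a i) (hb : ∀ i ∈ s, 1 ≤ b i) (haN : ∀ i ∈ s, a i < N)
    (habN : ∀ i ∈ s, a i * b i ≤ N) :
    ∏ i ∈ s, (N - a i * b i) / (N - a i) ≤ ∏ i ∈ s, (N - b i) / (N - 1) :=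
  prod_le_prod (fun i hi => div_nonneg (sub_nonneg.2 (habN i hi)) (sub_nonneg.2 (haN i hi).le))
    fun i hi => sub_mul_div_sub_le_sub_div_sub_one (ha i hi) (hb i hi) (haN i hi)

end FactorInequality

theorem two_mul_cast_le_of_two_le_div {K : Type*} [Semiring K] [PartialOrder K]
    [IsOrderedRing K] {m N : ℕ} (h : 2 ≤ N / m) : 2 * (m : K) ≤ N := by
  have h2m : 2 * m ≤ N := by linarith [Nat.mul_le_of_le_div m 2 N h]
  exact_mod_cast Nat.mono_cast (α := K) h2m

theorem prod_Icc_one_eq_mul_prod_Icc_two {M : Type*} [CommMonoid M] {r : ℕ} (hr : 1 ≤ r)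
    (f : ℕ → M) : ∏ i ∈ Icc 1 r, f i = f 1 * ∏ i ∈ Icc 2 r, f i := by
  rw [← insert_Icc_succ_left_eq_Icc hr, prod_insert (by simp)]
  rfl

theorem prod_Icc_one_sub_div_sq_mul_sub_one {K : Type*} [Field K] {r : ℕ} (hr : 1 ≤ r)
    (N : K) (x : ℕ → K) :
    ∏ i ∈ Icc 1 r, (N - x i) / (x i ^ 2 * (N - 1)) =
      (∏ i ∈ Icc 1 r, (x i ^ 2)⁻¹) *
        ((N - x 1) / (N - 1) * ∏ i ∈ Icc 2 r, (N - x i) / (N - 1)) := by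
  rw [← prod_Icc_one_eq_mul_prod_Icc_two hr fun i => (N - x i) / (N - 1), ← prod_mul_distrib]
  exact prod_congr rfl fun i _ => by
    rw [mul_comm (x i ^ 2), ← div_div, div_eq_inv_mul ((N - x i) / (N - 1))]

theorem secondWay_variance_le_firstWay_variance_general (r : ℕ) (hr : 1 ≤ r) (n : ℕ → ℕ)
    (hn : ∀ i ∈ Finset.Icc 1 r, 0 < n i)
    (N : ℕ) (hN : 2 ≤ N)
    (hsize : ∀ i ∈ Finset.Icc 1 r, 2 ≤ N / n i)
    (hsize' : ∀ i ∈ Finset.Icc 2 r, 2 ≤ N / (n (i - 1) * n i)) :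
    ((N : ℚ) / (∏ i ∈ Finset.Icc 1 r, (n i : ℚ)) -
        (N : ℚ) ^ 2 / (∏ i ∈ Finset.Icc 1 r, (n i : ℚ) ^ 2) +
        (N : ℚ) * ((N : ℚ) - 1) * (∏ i ∈ Finset.Icc 1 r, ((n i : ℚ) ^ 2)⁻¹) *
          (((N : ℚ) - (n 1 : ℚ)) / ((N : ℚ) - 1)) *
          ∏ i ∈ Finset.Icc 2 r,
            ((N : ℚ) - (n (i - 1) : ℚ) * (n i : ℚ)) / ((N : ℚ) - (n (i - 1) : ℚ)))
      ≤
      ((N : ℚ) / (∏ i ∈ Finset.Icc 1 r, (n i : ℚ)) -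
        (N : ℚ) ^ 2 / (∏ i ∈ Finset.Icc 1 r, (n i : ℚ) ^ 2) +
        (N : ℚ) * ((N : ℚ) - 1) *
          ∏ i ∈ Finset.Icc 1 r,
            ((N : ℚ) - (n i : ℚ)) / ((n i : ℚ) ^ 2 * ((N : ℚ) - 1)))
    ∧
    ∀ i ∈ Finset.Icc 2 r,
      (((N : ℚ) - (n (i - 1) : ℚ) * (n i : ℚ)) * ((N : ℚ) - 1) ≤
          ((N : ℚ) - (n i : ℚ)) * ((N : ℚ) - (n (i - 1) : ℚ))) ∧
      ((((N : ℚ) - (n (i - 1) : ℚ) * (n i : ℚ)) * ((N : ℚ) - 1) ≤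
          ((N : ℚ) - (n i : ℚ)) * ((N : ℚ) - (n (i - 1) : ℚ))) ↔
        0 ≤ ((n (i - 1) : ℚ) - 1) * ((n i : ℚ) - 1)) := by
  have hN1 : (1 : ℚ) < N := by exact_mod_cast hN
  have hn1 : ∀ i ∈ Icc 1 r, (1 : ℚ) ≤ n i := fun i hi => by exact_mod_cast hn i hi
  have hpair : ∀ i ∈ Icc 2 r,
      1 ≤ (n (i - 1) : ℚ) ∧ 1 ≤ (n i : ℚ) ∧ 2 * ((n (i - 1) : ℚ) * n i) ≤ N := fun i hi => by
    have hi' : i - 1 ∈ Icc 1 r ∧ i ∈ Icc 1 r := by simp only [mem_Icc] at hi ⊢; omega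
    exact ⟨hn1 _ hi'.1, hn1 _ hi'.2,
      by exact_mod_cast two_mul_cast_le_of_two_le_div (hsize' i hi)⟩
  refine ⟨?variance, fun i hi => ?factor⟩
  case factor =>
    obtain ⟨ha, hb, -⟩ := hpair i hi
    have h := sub_mul_mul_sub_one_le_iff (N := (N : ℚ)) (a := n (i - 1)) (b := n i) (by linarith)
    exact ⟨h.2 (mul_nonneg (sub_nonneg.2 ha) (sub_nonneg.2 hb)), h⟩
  case variance =>
    have hprod := prod_sub_mul_div_sub_le_prod_sub_div_sub_one (N := (N : ℚ)) (s := Icc 2 r)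
      (a := fun i => n (i - 1)) (b := fun i => n i) (fun i hi => (hpair i hi).1)
      (fun i hi => (hpair i hi).2.1) (fun i hi => by nlinarith [hpair i hi])
      (fun i hi => by nlinarith [hpair i hi])
    have hn₁N : 2 * (n 1 : ℚ) ≤ N := two_mul_cast_le_of_two_le_div (hsize 1 (by simp [hr]))
    have hfirst : (0 : ℚ) ≤ (N - n 1) / (N - 1) :=
      div_nonneg (by linarith [(n 1).cast_nonneg (α := ℚ)]) (by linarith)
    have hcoef :
        (0 : ℚ) ≤ N * (N - 1) * (∏ i ∈ Icc 1 r, ((n i : ℚ) ^ 2)⁻¹) * ((N - n 1) / (N - 1)) :=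
      mul_nonneg (mul_nonneg (mul_nonneg (by linarith) (by linarith))
        (prod_nonneg fun i _ => by positivity)) hfirst
    rw [prod_Icc_one_sub_div_sq_mul_sub_one hr]
    linarith [mul_le_mul_of_nonneg_left hprod hcoef]

/-- **Comparison of the two ways**: with `V₁(N)` and `V₂(N)` the exact variances of the
label count in the First and Second Way respectively (their closed forms), we have
`V₂(N) ≤ V₁(N)`; moreover, for each `2 ≤ i ≤ r` the factor inequality
`(N - n_{i-1} n_i)(N - 1) ≤ (N - n_i)(N - n_{i-1})` holds, and it is equivalent to
`(n_{i-1} - 1)(n_i - 1) ≥ 0`. -/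
theorem secondWay_variance_le_firstWay_variance (r : ℕ) (hr : 1 ≤ r) (n : ℕ → ℕ)
    (hn : ∀ i ∈ Finset.Icc 1 r, 0 < n i)
    (N : ℕ) (hN : 2 ≤ N)
    (hdvd : ∀ i ∈ Finset.Icc 1 r, n i ∣ N)
    (hdvd' : ∀ i ∈ Finset.Icc 2 r, n (i - 1) * n i ∣ N)
    (hsize : ∀ i ∈ Finset.Icc 1 r, 2 ≤ N / n i)
    (hsize' : ∀ i ∈ Finset.Icc 2 r, 2 ≤ N / (n (i - 1) * n i)) :
    ((N : ℚ) / (∏ i ∈ Finset.Icc 1 r, (n i : ℚ)) -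
        (N : ℚ) ^ 2 / (∏ i ∈ Finset.Icc 1 r, (n i : ℚ) ^ 2) +
        (N : ℚ) * ((N : ℚ) - 1) * (∏ i ∈ Finset.Icc 1 r, ((n i : ℚ) ^ 2)⁻¹) *
          (((N : ℚ) - (n 1 : ℚ)) / ((N : ℚ) - 1)) *
          ∏ i ∈ Finset.Icc 2 r,
            ((N : ℚ) - (n (i - 1) : ℚ) * (n i : ℚ)) / ((N : ℚ) - (n (i - 1) : ℚ)))
      ≤
      ((N : ℚ) / (∏ i ∈ Finset.Icc 1 r, (n i : ℚ)) -
        (N : ℚ) ^ 2 / (∏ i ∈ Finset.Icc 1 r, (n i : ℚ) ^ 2) +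
        (N : ℚ) * ((N : ℚ) - 1) *
          ∏ i ∈ Finset.Icc 1 r,
            ((N : ℚ) - (n i : ℚ)) / ((n i : ℚ) ^ 2 * ((N : ℚ) - 1)))
    ∧
    ∀ i ∈ Finset.Icc 2 r,
      (((N : ℚ) - (n (i - 1) : ℚ) * (n i : ℚ)) * ((N : ℚ) - 1) ≤
          ((N : ℚ) - (n i : ℚ)) * ((N : ℚ) - (n (i - 1) : ℚ))) ∧
      ((((N : ℚ) - (n (i - 1) : ℚ) * (n i : ℚ)) * ((N : ℚ) - 1) ≤
          ((N : ℚ) - (n i : ℚ)) * ((N : ℚ) - (n (i - 1) : ℚ))) ↔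
        0 ≤ ((n (i - 1) : ℚ) - 1) * ((n i : ℚ) - 1)) :=
  secondWay_variance_le_firstWay_variance_general r hr n hn N hN hsize hsize'
end
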